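/- arXiv:2511.10551 — 2 statements merged into one kernel-verified Lean document; each statement's English description precedes it below -/
import Mathlib

section
/- Let X be a geodesic δ-hyperbolic metric space. Let A be a hyperbolic isometry of X, let L_A : ℝ → X be a geodesic from A⁻ to A⁺, and set o = L_A(0). Let B be an isometry of X and suppose M : ℝ → X is a geodesic line whose negative end is A⁻ and whose positive end is B(A⁺), encoded by: the Gromov products (A⁻ⁿo | M(−t))_o tend to +∞ as min(n,t) → +∞, and the Gromov products (B Aⁿ o | M(t))_o tend to +∞ as min(n,t) → +∞ (in particular B(A⁺) ≠ A⁻). Let p(o) be a projection of o on M(ℝ). Set k = 3·d(Bo, o) + 2·d(p(o), o) + 36δ and N = (1 / l_S(A)) · max{ 4·d(Bo,o) + 3·d(p(o),o) + 51δ , 2·d(Bo,o) + 4·d(p(o),o) + 5δ }. Then for every integer n ≥ N: l_S(B Aⁿ) ≥ n·l_S(A) − k. -/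
open Metric Filter Set Topology

/-- The Gromov product `(x|y)_z = ½(d(z,x)+d(z,y)−d(x,y))`. -/
noncomputable def gromovProd {X : Type*} [MetricSpace X] (x y z : X) : ℝ :=
  (dist z x + dist z y - dist x y) / 2

/-- A parametrized geodesic segment from `x` to `y` (defined on `[0, dist x y]`). -/
def IsGeodesicSegment {X : Type*} [MetricSpace X] (x y : X) (f : ℝ → X) : Prop :=
  f 0 = x ∧ f (dist x y) = y ∧
    ∀ s ∈ Set.Icc (0 : ℝ) (dist x y), ∀ t ∈ Set.Icc (0 : ℝ) (dist x y),
      dist (f s) (f t) = |s - t|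

/-- The metric space `X` is geodesic: any two points are joined by a geodesic segment. -/
def GeodesicMetricSpace (X : Type*) [MetricSpace X] : Prop :=
  ∀ x y : X, ∃ f : ℝ → X, IsGeodesicSegment x y f

/-- `X` is δ-hyperbolic in the sense of Rips: every geodesic triangle is δ-thin,
i.e. each side is contained in the δ-neighbourhood of the union of the other two. -/
def RipsHyperbolic (X : Type*) [MetricSpace X] (δ : ℝ) : Prop :=
  ∀ (x y z : X) (f g h : ℝ → X),
    IsGeodesicSegment x y f → IsGeodesicSegment y z g → IsGeodesicSegment z x h →
      ∀ s ∈ Set.Icc (0 : ℝ) (dist x y),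
        infDist (f s) (g '' Set.Icc 0 (dist y z) ∪ h '' Set.Icc 0 (dist z x)) ≤ δ

/-- A (parametrized) geodesic line in `X`. -/
def IsGeodesicLine {X : Type*} [MetricSpace X] (L : ℝ → X) : Prop :=
  ∀ s t : ℝ, dist (L s) (L t) = |s - t|

/-- A (parametrized) geodesic ray in `X` (parametrized on `[0,∞)`). -/
def IsGeodesicRay {X : Type*} [MetricSpace X] (r : ℝ → X) : Prop :=
  ∀ s t : ℝ, 0 ≤ s → 0 ≤ t → dist (r s) (r t) = |s - t|

/-- `L` is a geodesic from `A⁻` to `A⁺` (oriented toward `A⁺`): it is a geodesic line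
such that, with `x₀ = L 0`, the Gromov products `(Aⁿx₀ | L t)_{x₀}` tend to `+∞` as
`min(n,t) → +∞`, and `(A⁻ⁿx₀ | L (−t))_{x₀}` tend to `+∞` as `min(n,t) → +∞`. -/
def IsGeodesicFromTo {X : Type*} [MetricSpace X] (A : X ≃ᵢ X) (L : ℝ → X) : Prop :=
  IsGeodesicLine L ∧
    (∀ M : ℝ, ∃ N : ℝ, ∀ (n : ℕ) (t : ℝ), N ≤ (n : ℝ) → N ≤ t →
      M ≤ gromovProd ((A ^ n) (L 0)) (L t) (L 0)) ∧
    (∀ M : ℝ, ∃ N : ℝ, ∀ (n : ℕ) (t : ℝ), N ≤ (n : ℝ) → N ≤ t →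
      M ≤ gromovProd ((A⁻¹ ^ n) (L 0)) (L (-t)) (L 0))

/-- An element of `F₂` is primitive if it is the image of a generator under an
automorphism of `F₂` (equivalently, it belongs to some free basis). -/
def Primitive (γ : FreeGroup (Fin 2)) : Prop :=
  ∃ φ : FreeGroup (Fin 2) ≃* FreeGroup (Fin 2), φ (FreeGroup.of 0) = γ

/-- The (reduced) word length of an element of `F₂`. -/
noncomputable def wordLength (γ : FreeGroup (Fin 2)) : ℕ := γ.toWord.length

/-- The cyclically reduced word length `‖γ‖`: the minimum of the word lengths
of the conjugates of `γ`. -/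
noncomputable def cycLength (γ : FreeGroup (Fin 2)) : ℕ :=
  sInf (Set.range fun g : FreeGroup (Fin 2) => wordLength (g * γ * g⁻¹))

/-- `γ` is cyclically reduced if its word length equals its cyclically reduced length. -/
def CyclicallyReduced (γ : FreeGroup (Fin 2)) : Prop :=
  wordLength γ = cycLength γ

namespace FareyAux
open Metric Filter Set Topology

variable {X : Type*} [MetricSpace X]

lemma gp_nonneg (x y z : X) : 0 ≤ gromovProd x y z := by
  have h := dist_triangle x z y
  have h1 : dist x z = dist z x := dist_comm _ _
  have h2 : dist z y = dist z y := rfl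
  simp only [gromovProd]
  linarith

lemma gp_comm (x y z : X) : gromovProd x y z = gromovProd y x z := by
  simp only [gromovProd]
  rw [dist_comm x y]
  ring

lemma gp_le_dist (x y z : X) : gromovProd x y z ≤ dist z x := by
  have h := dist_triangle z x y
  have h1 : dist x z = dist z x := dist_comm _ _
  simp only [gromovProd]
  linarith

lemma gp_add (x y z : X) : gromovProd x y z + gromovProd x z y = dist z y := by
  simp only [gromovProd]
  rw [dist_comm y x, dist_comm y z, dist_comm x z]
  ring

lemma gp_endpoint (x y y' z : X) : gromovProd x y z ≤ gromovProd x y' z + dist y y' := by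
  have h1 : dist z y ≤ dist z y' + dist y' y := dist_triangle _ _ _
  have h2 : dist x y' ≤ dist x y + dist y y' := dist_triangle _ _ _
  have h3 : dist y' y = dist y y' := dist_comm _ _
  simp only [gromovProd]
  linarith

lemma gp_base (x y z z' : X) : gromovProd x y z ≤ gromovProd x y z' + dist z z' := by
  have h1 : dist z x ≤ dist z z' + dist z' x := dist_triangle _ _ _
  have h2 : dist z y ≤ dist z z' + dist z' y := dist_triangle _ _ _
  simp only [gromovProd]
  linarith

lemma gp_isom (e : X ≃ᵢ X) (x y z : X) : gromovProd (e x) (e y) (e z) = gromovProd x y z := by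
  simp only [gromovProd, e.dist_eq]

lemma mulApply_eq {g h k : X ≃ᵢ X} (hgh : g * h = k) (x : X) : g (h x) = k x := by
  rw [← hgh]; rfl

lemma dist_inv_pow (A : X ≃ᵢ X) (k : ℕ) (o : X) : dist ((A⁻¹ ^ k) o) o = dist ((A ^ k) o) o := by
  have h1 : (A ^ k) ((A⁻¹ ^ k) o) = o := by
    rw [mulApply_eq (show (A^k) * (A⁻¹^k) = 1 by group)]; rfl
  calc dist ((A⁻¹ ^ k) o) o = dist ((A ^ k) ((A⁻¹ ^ k) o)) ((A ^ k) o) := ((A ^ k).dist_eq _ _).symm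
  _ = dist o ((A ^ k) o) := by rw [h1]
  _ = dist ((A ^ k) o) o := dist_comm _ _

lemma dist_mixed (A : X ≃ᵢ X) (m n : ℕ) (o : X) :
    dist ((A⁻¹ ^ m) o) ((A ^ n) o) = dist ((A ^ (m + n)) o) o := by
  have h1 : (A ^ m) ((A⁻¹ ^ m) o) = o := by
    rw [mulApply_eq (show (A^m) * (A⁻¹^m) = 1 by group)]; rfl
  have h2 : (A ^ m) ((A ^ n) o) = (A ^ (m + n)) o :=
    mulApply_eq (by rw [← pow_add]) o
  calc dist ((A⁻¹ ^ m) o) ((A ^ n) o)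
      = dist ((A ^ m) ((A⁻¹ ^ m) o)) ((A ^ m) ((A ^ n) o)) := ((A ^ m).dist_eq _ _).symm
  _ = dist o ((A ^ (m + n)) o) := by rw [h1, h2]
  _ = _ := dist_comm _ _

lemma seg_dist {x y : X} {f : ℝ → X} (hf : IsGeodesicSegment x y f) {s : ℝ}
    (hs : s ∈ Set.Icc (0:ℝ) (dist x y)) :
    dist x (f s) = s ∧ dist (f s) y = dist x y - s := by
  obtain ⟨h0, hd, hiso⟩ := hf
  have h1 := hiso 0 ⟨le_refl 0, dist_nonneg⟩ s hs
  have h2 := hiso s hs (dist x y) ⟨dist_nonneg, le_refl _⟩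
  rw [h0] at h1; rw [hd] at h2
  constructor
  · rw [h1, abs_of_nonpos (by linarith [hs.1] : (0:ℝ) - s ≤ 0)]; ring
  · rw [h2, abs_of_nonpos (by linarith [hs.2] : s - dist x y ≤ 0)]; ring

lemma gp_le_seg {x y : X} {f : ℝ → X} (hf : IsGeodesicSegment x y f) {s : ℝ}
    (hs : s ∈ Set.Icc (0:ℝ) (dist x y)) (w : X) :
    gromovProd x y w ≤ dist w (f s) := by
  obtain ⟨e1, e2⟩ := seg_dist hf hs
  have h1 := dist_triangle w (f s) x
  have h2 := dist_triangle w (f s) y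
  have h3 : dist (f s) x = s := by rw [dist_comm]; exact e1
  simp only [gromovProd]
  linarith

lemma line_seg {L : ℝ → X} (hL : IsGeodesicLine L) {a b : ℝ} (hab : a ≤ b) :
    IsGeodesicSegment (L a) (L b) (fun ρ => L (ρ + a)) := by
  have hd : dist (L a) (L b) = b - a := by
    rw [hL a b, abs_of_nonpos (by linarith : a - b ≤ 0)]; ring
  refine ⟨by simp, ?_, ?_⟩
  · rw [hd]; show L (b - a + a) = L b; rw [sub_add_cancel]
  · intro s _ t _
    show dist (L (s + a)) (L (t + a)) = |s - t|
    rw [hL (s + a) (t + a)]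
    congr 1; ring

lemma line_dist {L : ℝ → X} (hL : IsGeodesicLine L) {a b : ℝ} (hab : a ≤ b) :
    dist (L a) (L b) = b - a := by
  rw [hL a b, abs_of_nonpos (by linarith : a - b ≤ 0)]; ring

lemma seg_reverse {x y : X} {f : ℝ → X} (hf : IsGeodesicSegment x y f) :
    IsGeodesicSegment y x (fun ρ => f (dist x y - ρ)) := by
  obtain ⟨h0, hd, hiso⟩ := hf
  have hc : dist y x = dist x y := dist_comm y x
  refine ⟨by simpa using hd, ?_, ?_⟩
  · show f (dist x y - dist y x) = x
    rw [hc, sub_self, h0]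
  · intro s hs t ht
    rw [hc] at hs ht
    have h := hiso (dist x y - s) ⟨by linarith [hs.2], by linarith [hs.1]⟩
      (dist x y - t) ⟨by linarith [ht.2], by linarith [ht.1]⟩
    show dist (f (dist x y - s)) (f (dist x y - t)) = |s - t|
    rw [h, show dist x y - s - (dist x y - t) = t - s by ring, abs_sub_comm]

end FareyAux

namespace FareyAux
open Metric Filter Set Topology

variable {X : Type*} [MetricSpace X]

lemma near_pt {x y z : X} {f g h : ℝ → X} (hhyp : RipsHyperbolic X δ')
    (hf : IsGeodesicSegment x y f) (hg : IsGeodesicSegment y z g) (hh : IsGeodesicSegment z x h)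
    {s : ℝ} (hs : s ∈ Set.Icc (0:ℝ) (dist x y)) {ε : ℝ} (hε : 0 < ε) :
    ∃ q ∈ g '' Set.Icc 0 (dist y z) ∪ h '' Set.Icc 0 (dist z x),
      dist (f s) q < δ' + ε := by
  have hinf := hhyp x y z f g h hf hg hh s hs
  have hne : (g '' Set.Icc 0 (dist y z) ∪ h '' Set.Icc 0 (dist z x)).Nonempty :=
    ⟨g 0, Or.inl (Set.mem_image_of_mem g ⟨le_refl 0, dist_nonneg⟩)⟩
  exact (infDist_lt_iff hne).1 (lt_of_le_of_lt hinf (lt_add_of_pos_right δ' hε))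

lemma exists_near {δ : ℝ} (hgeo : GeodesicMetricSpace X) (hhyp : RipsHyperbolic X δ)
    {x z : X} {f : ℝ → X} (hf : IsGeodesicSegment x z f) (w : X) {ε : ℝ} (hε : 0 < ε) :
    ∃ s ∈ Set.Icc (0:ℝ) (dist x z), dist w (f s) ≤ gromovProd x z w + 2*δ + 2*ε := by
  obtain ⟨g, hg⟩ := hgeo z w
  obtain ⟨h, hh⟩ := hgeo w x
  have hs₀m : gromovProd z w x ∈ Set.Icc (0:ℝ) (dist x z) :=
    ⟨gp_nonneg _ _ _, gp_le_dist _ _ _⟩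
  set s₀ := gromovProd z w x with hs₀def
  obtain ⟨q, hq, hqd⟩ := near_pt hhyp hf hg hh hs₀m hε
  refine ⟨s₀, hs₀m, ?_⟩
  obtain ⟨e1, e2⟩ := seg_dist hf hs₀m
  have hgp : s₀ = (dist x z + dist x w - dist z w) / 2 := by
    simp only [hs₀def, gromovProd]
  have hcomm1 : dist w x = dist x w := dist_comm _ _
  have hcomm2 : dist w z = dist z w := dist_comm _ _
  simp only [gromovProd]
  rcases hq with ⟨u, hu, rfl⟩ | ⟨u, hu, rfl⟩
  · obtain ⟨e3, e4⟩ := seg_dist hg hu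
    -- dist z (g u) = u, dist (g u) w = dist z w - u
    have t1 : dist z (f s₀) ≤ dist z (g u) + dist (g u) (f s₀) := dist_triangle _ _ _
    have t2 : dist w (f s₀) ≤ dist w (g u) + dist (g u) (f s₀) := dist_triangle _ _ _
    have t3 : dist (g u) (f s₀) = dist (f s₀) (g u) := dist_comm _ _
    have t4 : dist w (g u) = dist (g u) w := dist_comm _ _
    have t5 : dist z (f s₀) = dist (f s₀) z := dist_comm _ _
    linarith
  · obtain ⟨e3, e4⟩ := seg_dist hh hu
    -- dist w (h u) = u, dist (h u) x = dist w x - u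
    have t1 : dist x (f s₀) ≤ dist x (h u) + dist (h u) (f s₀) := dist_triangle _ _ _
    have t2 : dist w (f s₀) ≤ dist w (h u) + dist (h u) (f s₀) := dist_triangle _ _ _
    have t3 : dist (h u) (f s₀) = dist (f s₀) (h u) := dist_comm _ _
    have t4 : dist x (h u) = dist (h u) x := dist_comm _ _
    have t5 : dist x (f s₀) = s₀ := e1
    linarith

lemma four_point {δ : ℝ} (hδ : 0 ≤ δ) (hgeo : GeodesicMetricSpace X) (hhyp : RipsHyperbolic X δ)
    (w x y z : X) :
    min (gromovProd x y w) (gromovProd y z w) ≤ gromovProd x z w + 3*δ := by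
  refine le_of_forall_pos_le_add fun ε hε => ?_
  have hε6 : 0 < ε/6 := by linarith
  obtain ⟨f, hf⟩ := hgeo x z
  obtain ⟨s₀, hs₀, hnear⟩ := exists_near hgeo hhyp hf w hε6
  obtain ⟨g, hg⟩ := hgeo x y
  obtain ⟨h, hh⟩ := hgeo y z
  have hf' := seg_reverse hf
  have hmem : dist x z - s₀ ∈ Set.Icc (0:ℝ) (dist z x) := by
    rw [dist_comm z x]
    exact ⟨by linarith [hs₀.2], by linarith [hs₀.1]⟩
  obtain ⟨q, hq, hqd⟩ := near_pt hhyp hf' hg hh hmem hε6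
  have hpt : f (dist x z - (dist x z - s₀)) = f s₀ := by
    congr 1; ring
  rw [hpt] at hqd
  rcases hq with ⟨u, hu, rfl⟩ | ⟨u, hu, rfl⟩
  · have h1 : gromovProd x y w ≤ dist w (g u) := gp_le_seg hg hu w
    have h2 : dist w (g u) ≤ dist w (f s₀) + dist (f s₀) (g u) := dist_triangle _ _ _
    have := min_le_left (gromovProd x y w) (gromovProd y z w)
    linarith
  · have h1 : gromovProd y z w ≤ dist w (h u) := gp_le_seg hh hu w
    have h2 : dist w (h u) ≤ dist w (f s₀) + dist (f s₀) (h u) := dist_triangle _ _ _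
    have := min_le_right (gromovProd x y w) (gromovProd y z w)
    linarith

end FareyAux

namespace FareyAux
open Metric Filter Set Topology

variable {X : Type*} [MetricSpace X]

lemma fekete (A : X ≃ᵢ X) (o : X) (lA : ℝ)
    (hlA : Tendsto (fun n : ℕ => dist ((A ^ n) o) o / n) atTop (𝓝 lA)) (k : ℕ) :
    (k : ℝ) * lA ≤ dist ((A ^ k) o) o := by
  rcases Nat.eq_zero_or_pos k with rfl | hk
  · simp
  have hsub : ∀ m : ℕ, dist ((A ^ (k * m)) o) o ≤ (m : ℝ) * dist ((A ^ k) o) o := by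
    intro m
    induction m with
    | zero => simp
    | succ m ih =>
      have hmul : dist ((A ^ (k * (m + 1))) o) ((A ^ (k * m)) o) = dist ((A ^ k) o) o := by
        calc dist ((A ^ (k * (m + 1))) o) ((A ^ (k * m)) o)
            = dist ((A ^ (k * m)) ((A ^ k) o)) ((A ^ (k * m)) o) := by
              rw [mulApply_eq (show (A ^ (k*m)) * (A ^ k) = A ^ (k * (m+1)) by
                rw [← pow_add]; ring_nf)]
        _ = dist ((A ^ k) o) o := (A ^ (k * m)).dist_eq _ _
      have htri : dist ((A ^ (k * (m+1))) o) o ≤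
          dist ((A ^ (k * (m+1))) o) ((A ^ (k * m)) o) + dist ((A ^ (k * m)) o) o :=
        dist_triangle _ _ _
      push_cast
      push_cast at ih
      rw [hmul] at htri
      linarith
  have hmono : Tendsto (fun m : ℕ => k * m) atTop atTop :=
    tendsto_atTop_mono (fun m => Nat.le_mul_of_pos_left m hk) tendsto_id
  have hcomp : Tendsto (fun m : ℕ => dist ((A ^ (k * m)) o) o / (↑(k * m))) atTop (𝓝 lA) :=
    hlA.comp hmono
  have hle : lA ≤ dist ((A ^ k) o) o / k := by
    refine le_of_tendsto hcomp ?_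
    filter_upwards [eventually_ge_atTop 1] with m hm
    have hm' : (1:ℝ) ≤ (m:ℝ) := by exact_mod_cast hm
    have hk' : (0:ℝ) < (k:ℝ) := by exact_mod_cast hk
    have hkm : (0:ℝ) < ((k * m : ℕ) : ℝ) := by
      push_cast; positivity
    rw [div_le_div_iff₀ hkm hk']
    have := hsub m
    push_cast
    push_cast at this
    nlinarith [dist_nonneg (x := (A ^ (k * m)) o) (y := o)]
  have hk' : (0:ℝ) < (k:ℝ) := by exact_mod_cast hk
  calc (k:ℝ) * lA ≤ (k:ℝ) * (dist ((A ^ k) o) o / k) := by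
        exact mul_le_mul_of_nonneg_left hle hk'.le
  _ = dist ((A ^ k) o) o := by field_simp

lemma chain {δ : ℝ} (hδ : 0 ≤ δ) (hgeo : GeodesicMetricSpace X) (hhyp : RipsHyperbolic X δ)
    (g : X ≃ᵢ X) (o : X)
    (hcond : 2 * gromovProd (g o) (g⁻¹ o) o + 6 * δ < dist (g o) o) :
    ∀ m : ℕ, 1 ≤ m →
      (m : ℝ) * dist (g o) o - 2 * ((m : ℝ) - 1) * (gromovProd (g o) (g⁻¹ o) o + 3 * δ)
        ≤ dist ((g ^ m) o) o := by
  set c := gromovProd (g o) (g⁻¹ o) o with hc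
  set D := dist (g o) o with hD
  -- step distance
  have hstep : ∀ i : ℕ, dist ((g ^ i) o) ((g ^ (i+1)) o) = D := by
    intro i
    calc dist ((g ^ i) o) ((g ^ (i+1)) o) = dist ((g ^ i) o) ((g ^ i) (g o)) := by
          rw [mulApply_eq (show (g ^ i) * g = g ^ (i+1) from (pow_succ g i).symm)]
    _ = dist o (g o) := (g ^ i).dist_eq _ _
    _ = D := dist_comm _ _
  -- shifted gromov product
  have hshift : ∀ i : ℕ, gromovProd ((g ^ i) o) ((g ^ (i+2)) o) ((g ^ (i+1)) o) = c := by
    intro i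
    have h1 : ((g ^ (i+1))⁻¹) ((g ^ i) o) = g⁻¹ o :=
      mulApply_eq (show (g ^ (i+1))⁻¹ * (g ^ i) = g⁻¹ by group) o
    have h2 : ((g ^ (i+1))⁻¹) ((g ^ (i+2)) o) = g o :=
      mulApply_eq (show (g ^ (i+1))⁻¹ * (g ^ (i+2)) = g by group) o
    have h3 : ((g ^ (i+1))⁻¹) ((g ^ (i+1)) o) = o :=
      mulApply_eq (show (g ^ (i+1))⁻¹ * (g ^ (i+1)) = 1 by group) o
    calc gromovProd ((g ^ i) o) ((g ^ (i+2)) o) ((g ^ (i+1)) o)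
        = gromovProd (((g ^ (i+1))⁻¹) ((g ^ i) o)) (((g ^ (i+1))⁻¹) ((g ^ (i+2)) o))
            (((g ^ (i+1))⁻¹) ((g ^ (i+1)) o)) := (gp_isom _ _ _ _).symm
    _ = gromovProd (g⁻¹ o) (g o) o := by rw [h1, h2, h3]
    _ = c := gp_comm _ _ _
  -- the P bound
  have hP : ∀ i : ℕ, 1 ≤ i → gromovProd o ((g ^ (i+1)) o) ((g ^ i) o) ≤ c + 3 * δ := by
    intro i hi
    induction i with
    | zero => omega
    | succ i ih =>
      rcases Nat.eq_zero_or_pos i with rfl | hi'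
      · -- base case i+1 = 1
        have h0 := hshift 0
        have he : (g ^ 0) o = o := by simp
        rw [he] at h0
        have hcle : 0 ≤ 3 * δ := by linarith
        rw [show (0:ℕ)+2 = 1+1 from rfl, show (0:ℕ)+1 = 1 from rfl] at h0
        linarith [h0.ge, h0.le]
      · have hPi := ih hi'
        -- four point at basepoint (g^(i+1)) o
        have h4 := four_point hδ hgeo hhyp ((g ^ (i+1)) o) ((g ^ i) o) o ((g ^ (i+2)) o)
        rw [hshift i] at h4
        -- gp ((g^i) o) o ((g^(i+1)) o) = D - P i
        have hid : gromovProd ((g ^ i) o) o ((g ^ (i+1)) o)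
            = D - gromovProd o ((g ^ (i+1)) o) ((g ^ i) o) := by
          have := gp_add o ((g ^ (i+1)) o) ((g ^ i) o)
          -- gp o y z + gp o z y = dist z y  with y = g^(i+1) o, z = g^i o
          have hcomm : gromovProd o ((g ^ i) o) ((g ^ (i+1)) o)
              = gromovProd ((g ^ i) o) o ((g ^ (i+1)) o) := gp_comm _ _ _
          rw [hstep i] at this
          linarith
        rcases min_cases (gromovProd ((g ^ i) o) o ((g ^ (i+1)) o))
            (gromovProd o ((g ^ (i+2)) o) ((g ^ (i+1)) o)) with ⟨hmin, hle⟩ | ⟨hmin, hle⟩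
        · rw [hmin] at h4
          exfalso
          linarith
        · rw [hmin] at h4
          -- goal: gp o (g^(i+2) o) (g^(i+1) o) ≤ c + 3δ ; note i+1+1 = i+2
          have : gromovProd o ((g ^ (i+2)) o) ((g ^ (i+1)) o) ≤ c + 3*δ := by linarith
          exact this
  -- distance induction
  intro m hm
  induction m with
  | zero => omega
  | succ m ih =>
    rcases Nat.eq_zero_or_pos m with rfl | hm'
    · have h1 : (g ^ (0+1)) o = g o := by simp
      rw [h1]; push_cast; linarith
    · have ihm := ih hm'
      have hPm := hP m hm'
      -- dist ((g^(m+1)) o) o = dist ((g^m) o) o + D - 2 * gp o ((g^(m+1)) o) ((g^m) o)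
      have hidm : gromovProd o ((g ^ (m+1)) o) ((g ^ m) o)
          = (dist ((g ^ m) o) o + D - dist o ((g ^ (m+1)) o)) / 2 := by
        simp only [gromovProd]
        rw [hstep m, dist_comm ((g ^ m) o) o]
      have hcomm : dist o ((g ^ (m+1)) o) = dist ((g ^ (m+1)) o) o := dist_comm _ _
      rw [hcomm] at hidm
      have hcnn : 0 ≤ c := gp_nonneg _ _ _
      push_cast
      push_cast at ihm
      nlinarith [hPm, hidm, ihm]
  
end FareyAux

namespace FareyAux
open Metric Filter Set Topology

variable {X : Type*} [MetricSpace X]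

lemma D3 {δ : ℝ} (hδ : 0 ≤ δ) (hgeo : GeodesicMetricSpace X) (hhyp : RipsHyperbolic X δ)
    (A : X ≃ᵢ X) (L : ℝ → X) (hline : IsGeodesicLine L) (o : X) (ho : L 0 = o)
    (lA : ℝ) (hFek : ∀ k : ℕ, (k : ℝ) * lA ≤ dist ((A ^ k) o) o)
    (Hpos : ∀ K : ℝ, ∃ N : ℝ, ∀ (k : ℕ) (r : ℝ), N ≤ (k : ℝ) → N ≤ r →
      K ≤ gromovProd ((A ^ k) o) (L r) o)
    (Hneg : ∀ K : ℝ, ∃ N : ℝ, ∀ (k : ℕ) (r : ℝ), N ≤ (k : ℝ) → N ≤ r →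
      K ≤ gromovProd ((A⁻¹ ^ k) o) (L (-r)) o)
    (n : ℕ) (ε : ℝ) (hε : 0 < ε) (hn : 23 * δ + 3 * ε ≤ (n : ℝ) * lA) :
    ∃ R : ℝ, ∀ r : ℝ, R ≤ r →
      (n : ℝ) * lA - 8 * δ - ε ≤ gromovProd ((A ^ n) o) (L r) o := by
  set dn := dist ((A ^ n) o) o with hdn
  have hdn0 : 0 ≤ dn := dist_nonneg
  have hdnlA : (n : ℝ) * lA ≤ dn := hFek n
  set ε' := ε / 2 with hε'
  have hε'0 : 0 < ε' := by positivity
  -- line basics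
  have hdor : ∀ r : ℝ, 0 ≤ r → dist o (L r) = r := by
    intro r hr
    rw [← ho, line_dist hline hr]; ring
  have hdor' : ∀ r : ℝ, 0 ≤ r → dist o (L (-r)) = r := by
    intro r hr
    rw [← ho, dist_comm, line_dist hline (show -r ≤ 0 by linarith)]; ring
  have hdrr : ∀ r : ℝ, 0 ≤ r → dist (L (-r)) (L r) = 2 * r := by
    intro r hr
    rw [line_dist hline (show -r ≤ r by linarith)]; ring
  ------------------------------------------------------------------
  -- PART 1 : closeness of (A^n) o to the line L
  ------------------------------------------------------------------
  have hclose : ∃ R₀ : ℝ, 0 ≤ R₀ ∧ ∀ r : ℝ, R₀ ≤ r →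
      gromovProd (L (-r)) (L r) ((A ^ n) o) ≤ 2 * δ + 2 * ε' := by
    set K := 2 * dn + 5 * δ + 2 * ε' + 1 with hK
    obtain ⟨Np, hNp⟩ := Hpos K
    obtain ⟨Nm, hNm⟩ := Hneg K
    set j : ℕ := ⌈max Np Nm⌉₊ with hj
    have hjNp : Np ≤ (j : ℝ) := le_trans (le_max_left _ _) (Nat.le_ceil _)
    have hjNm : Nm ≤ (j : ℝ) := le_trans (le_max_right _ _) (Nat.le_ceil _)
    set R : ℝ := max (max Np Nm) 0 with hR
    have hR0 : 0 ≤ R := le_max_right _ _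
    have hRNp : Np ≤ R := le_trans (le_max_left _ _) (le_max_left _ _)
    have hRNm : Nm ≤ R := le_trans (le_max_right _ _) (le_max_left _ _)
    set L₂ : ℝ → X := fun s => (A ^ n) (L s) with hL₂def
    have hlineL₂ : IsGeodesicLine L₂ := by
      intro s t
      show dist ((A ^ n) (L s)) ((A ^ n) (L t)) = |s - t|
      rw [(A ^ n).dist_eq]; exact hline s t
    have hdinv : dist o ((A⁻¹ ^ n) o) = dn := by
      rw [dist_comm, dist_inv_pow]
    -- lower bound on positive connector product
    have hconnPlus : K - 2 * dn - 3 * δ ≤ gromovProd (L₂ R) (L R) ((A ^ n) o) := by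
      have h2 : (A ^ n) ((A ^ j) o) = (A ^ (n + j)) o :=
        mulApply_eq (show (A ^ n) * (A ^ j) = A ^ (n + j) by rw [← pow_add]) o
      have h3 : (A ^ n) ((A⁻¹ ^ n) o) = o := by
        rw [mulApply_eq (show (A ^ n) * (A⁻¹ ^ n) = 1 by group)]; rfl
      have e1 : gromovProd (L₂ R) ((A ^ (n + j)) o) o
          = gromovProd (L R) ((A ^ j) o) ((A⁻¹ ^ n) o) := by
        have h5 := gp_isom (A ^ n) (L R) ((A ^ j) o) ((A⁻¹ ^ n) o)
        rw [h2, h3] at h5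
        exact h5
      have e2 := gp_base (L R) ((A ^ j) o) o ((A⁻¹ ^ n) o)
      have e3 : K ≤ gromovProd (L R) ((A ^ j) o) o := by
        rw [gp_comm]; exact hNp j R hjNp hRNp
      have e4 : K ≤ gromovProd ((A ^ (n + j)) o) (L R) o := by
        refine hNp (n + j) R ?_ hRNp
        push_cast
        linarith [Nat.cast_nonneg (α := ℝ) n]
      have h4 := four_point hδ hgeo hhyp o (L₂ R) ((A ^ (n + j)) o) (L R)
      have hbase := gp_base (L₂ R) (L R) o ((A ^ n) o)
      have hdoz : dist o ((A ^ n) o) = dn := by rw [dist_comm]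
      have hmin : K - dn ≤ min (gromovProd (L₂ R) ((A ^ (n + j)) o) o)
          (gromovProd ((A ^ (n + j)) o) (L R) o) := by
        refine le_min ?_ (by linarith)
        rw [e1]; linarith
      linarith [hbase, h4, hmin.trans (min_le_left _ _), hmin.trans (min_le_right _ _),
        le_min (hmin.trans (min_le_left _ _)) (hmin.trans (min_le_right _ _))]
    -- lower bound on negative connector product
    have hconnMinus : K - 2 * dn - 3 * δ ≤ gromovProd (L₂ (-R)) (L (-R)) ((A ^ n) o) := by
      have h2 : (A ^ n) ((A⁻¹ ^ (2 * n + j)) o) = (A⁻¹ ^ (n + j)) o :=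
        mulApply_eq (show (A ^ n) * (A⁻¹ ^ (2 * n + j)) = A⁻¹ ^ (n + j) by group) o
      have h3 : (A ^ n) ((A⁻¹ ^ n) o) = o := by
        rw [mulApply_eq (show (A ^ n) * (A⁻¹ ^ n) = 1 by group)]; rfl
      have e1 : gromovProd (L₂ (-R)) ((A⁻¹ ^ (n + j)) o) o
          = gromovProd (L (-R)) ((A⁻¹ ^ (2 * n + j)) o) ((A⁻¹ ^ n) o) := by
        have h5 := gp_isom (A ^ n) (L (-R)) ((A⁻¹ ^ (2 * n + j)) o) ((A⁻¹ ^ n) o)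
        rw [h2, h3] at h5
        exact h5
      have e2 := gp_base (L (-R)) ((A⁻¹ ^ (2 * n + j)) o) o ((A⁻¹ ^ n) o)
      have e3 : K ≤ gromovProd (L (-R)) ((A⁻¹ ^ (2 * n + j)) o) o := by
        rw [gp_comm]
        refine hNm (2 * n + j) R ?_ hRNm
        push_cast
        linarith [Nat.cast_nonneg (α := ℝ) n]
      have e4 : K ≤ gromovProd ((A⁻¹ ^ (n + j)) o) (L (-R)) o := by
        refine hNm (n + j) R ?_ hRNm
        push_cast
        linarith [Nat.cast_nonneg (α := ℝ) n]
      have h4 := four_point hδ hgeo hhyp o (L₂ (-R)) ((A⁻¹ ^ (n + j)) o) (L (-R))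
      have hbase := gp_base (L₂ (-R)) (L (-R)) o ((A ^ n) o)
      have hdoz : dist o ((A ^ n) o) = dn := by rw [dist_comm]
      have hmin : K - dn ≤ min (gromovProd (L₂ (-R)) ((A⁻¹ ^ (n + j)) o) o)
          (gromovProd ((A⁻¹ ^ (n + j)) o) (L (-R)) o) := by
        refine le_min ?_ (by linarith)
        rw [e1]; linarith
      linarith [hbase, h4, hmin.trans (min_le_left _ _), hmin.trans (min_le_right _ _)]
    -- first thin triangle: vertices L₂(-R), L₂(R), L(R)
    have hseg_f := line_seg hlineL₂ (show -R ≤ R by linarith)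
    obtain ⟨gseg, hgseg⟩ := hgeo (L₂ R) (L R)
    obtain ⟨hseg, hhseg⟩ := hgeo (L R) (L₂ (-R))
    have hdL₂ : dist (L₂ (-R)) (L₂ R) = 2 * R := by
      rw [line_dist hlineL₂ (show -R ≤ R by linarith)]; ring
    have hmemR : R ∈ Set.Icc (0:ℝ) (dist (L₂ (-R)) (L₂ R)) := by
      rw [hdL₂]; exact ⟨hR0, by linarith⟩
    obtain ⟨q, hq, hqd⟩ := near_pt hhyp hseg_f hgseg hhseg hmemR hε'0
    have hfz : L₂ (R + -R) = (A ^ n) o := by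
      rw [show R + -R = (0:ℝ) by ring]
      show (A ^ n) (L 0) = (A ^ n) o
      rw [ho]
    rw [hfz] at hqd
    rcases hq with ⟨u, hu, rfl⟩ | ⟨u, hu, rfl⟩
    · exfalso
      have hle := gp_le_seg hgseg hu ((A ^ n) o)
      linarith [hconnPlus, hle, hqd]
    -- q = hseg u is on the diagonal; second thin triangle
    obtain ⟨g₂, hg₂⟩ := hgeo (L₂ (-R)) (L (-R))
    have hh₂ := line_seg hline (show -R ≤ R by linarith)
    obtain ⟨q₂, hq₂, hq₂d⟩ := near_pt hhyp hhseg hg₂ hh₂ hu hε'0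
    rcases hq₂ with ⟨v, hv, rfl⟩ | ⟨v, hv, hveq⟩
    · exfalso
      have hA' := gp_le_seg hg₂ hv (hseg u)
      have hB' := gp_base (L₂ (-R)) (L (-R)) ((A ^ n) o) (hseg u)
      linarith [hconnMinus, hA', hB', hqd, hq₂d]
    · -- q₂ = L (v + -R) on the line
      have hq2eq : q₂ = L (v + -R) := hveq.symm
      rw [hq2eq] at hq₂d
      have hzq : dist ((A ^ n) o) (L (v + -R)) ≤ 2 * δ + 2 * ε' := by
        have := dist_triangle ((A ^ n) o) (hseg u) (L (v + -R))
        linarith [hqd, hq₂d]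
      -- bounds on the parameter
      have hvmem : 0 ≤ v ∧ v ≤ 2 * R := by
        rcases hv with ⟨hv1, hv2⟩
        constructor
        · exact hv1
        · have : dist (L (-R)) (L R) = 2 * R := hdrr R hR0
          linarith [hv2, this.le, this.ge]
      refine ⟨R, hR0, fun r hr => ?_⟩
      have hr0 : 0 ≤ r := le_trans hR0 hr
      have hmemr : v + -R + r ∈ Set.Icc (0:ℝ) (dist (L (-r)) (L r)) := by
        rw [hdrr r hr0]
        exact ⟨by linarith [hvmem.1], by linarith [hvmem.2]⟩
      have hgps := gp_le_seg (line_seg hline (show -r ≤ r by linarith)) hmemr ((A ^ n) o)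
      have hbeta : L (v + -R + r + -r) = L (v + -R) := by congr 1; ring
      rw [hbeta] at hgps
      linarith [hzq, hgps]
  ------------------------------------------------------------------
  -- PART 2 : dichotomy and descent
  ------------------------------------------------------------------
  obtain ⟨R₀, hR₀0, hR₀⟩ := hclose
  have hsum : ∀ r : ℝ, 0 ≤ r →
      gromovProd ((A ^ n) o) (L r) o + gromovProd ((A ^ n) o) (L (-r)) o
        = dn - gromovProd (L r) (L (-r)) ((A ^ n) o) := by
    intro r hr
    simp only [gromovProd]
    rw [hdor r hr, hdor' r hr, dist_comm (L r) (L (-r)), hdrr r hr,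
      dist_comm o ((A ^ n) o), ← hdn]
    ring
  have hF1 : ∀ r : ℝ, 0 ≤ r →
      min (gromovProd (L r) ((A ^ n) o) o) (gromovProd ((A ^ n) o) (L (-r)) o) ≤ 3 * δ := by
    intro r hr
    have h0 : gromovProd (L r) (L (-r)) o = 0 := by
      simp only [gromovProd]
      rw [hdor r hr, hdor' r hr, dist_comm (L r) (L (-r)), hdrr r hr]
      ring
    have h4 := four_point hδ hgeo hhyp o (L r) ((A ^ n) o) (L (-r))
    rw [h0] at h4
    linarith
  have hLL : ∀ a b : ℝ, 0 ≤ a → a ≤ b → gromovProd (L a) (L b) o = a := by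
    intro a b ha hab
    simp only [gromovProd]
    rw [hdor a ha, hdor b (le_trans ha hab), line_dist hline hab]
    ring
  have hLLneg : ∀ a b : ℝ, 0 ≤ a → a ≤ b → gromovProd (L (-a)) (L (-b)) o = a := by
    intro a b ha hab
    simp only [gromovProd]
    rw [hdor' a ha, hdor' b (le_trans ha hab), dist_comm (L (-a)) (L (-b)),
      line_dist hline (show -b ≤ -a by linarith)]
    ring
  set rstar := max (max R₀ dn) 0 with hrstar
  have hrs0 : 0 ≤ rstar := le_max_right _ _
  have hrsR₀ : R₀ ≤ rstar := le_trans (le_max_left _ _) (le_max_left _ _)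
  have hrsdn : dn ≤ rstar := le_trans (le_max_right _ _) (le_max_left _ _)
  have hmax2 : dn - 5 * δ - 2 * ε' ≤ gromovProd ((A ^ n) o) (L rstar) o ∨
      dn - 5 * δ - 2 * ε' ≤ gromovProd ((A ^ n) o) (L (-rstar)) o := by
    have hs := hsum rstar hrs0
    have hm := hF1 rstar hrs0
    have hcl : gromovProd (L rstar) (L (-rstar)) ((A ^ n) o) ≤ 2 * δ + 2 * ε' := by
      rw [gp_comm]; exact hR₀ rstar hrsR₀
    have hcomm : gromovProd (L rstar) ((A ^ n) o) o = gromovProd ((A ^ n) o) (L rstar) o :=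
      gp_comm _ _ _
    rcases min_le_iff.1 hm with h | h
    · right; rw [hcomm] at h; linarith
    · left; linarith
  rcases hmax2 with hplus | hminus
  · -- GOOD case : A^n o is deep on the positive side
    refine ⟨rstar, fun r hr => ?_⟩
    have h4 := four_point hδ hgeo hhyp o ((A ^ n) o) (L rstar) (L r)
    have hll : gromovProd (L rstar) (L r) o = rstar := hLL rstar r hrs0 hr
    have hminb : dn - 5 * δ - 2 * ε' ≤ min (gromovProd ((A ^ n) o) (L rstar) o)
        (gromovProd (L rstar) (L r) o) := by
      refine le_min hplus ?_
      rw [hll]; linarith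
    have : dn - 8 * δ - 2 * ε' ≤ gromovProd ((A ^ n) o) (L r) o := by linarith
    linarith [hdnlA]
  · -- BAD case : descent gives a contradiction
    exfalso
    have hmall : ∀ r : ℝ, rstar ≤ r →
        dn - 8 * δ - 2 * ε' ≤ gromovProd ((A ^ n) o) (L (-r)) o := by
      intro r hr
      have h4 := four_point hδ hgeo hhyp o ((A ^ n) o) (L (-rstar)) (L (-r))
      have hll : gromovProd (L (-rstar)) (L (-r)) o = rstar := hLLneg rstar r hrs0 hr
      have hminb : dn - 5 * δ - 2 * ε' ≤ min (gromovProd ((A ^ n) o) (L (-rstar)) o)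
          (gromovProd (L (-rstar)) (L (-r)) o) := by
        refine le_min hminus ?_
        rw [hll]; linarith
      linarith
    obtain ⟨N₃, hN₃⟩ := Hneg dn
    set s := max N₃ rstar with hs
    have hdec : ∀ m : ℕ, N₃ ≤ (m : ℝ) →
        dist ((A ^ (m + n)) o) o ≤ dist ((A ^ m) o) o - (dn - 22 * δ - 4 * ε') := by
      intro m hm
      have h1 : dn ≤ gromovProd ((A⁻¹ ^ m) o) (L (-s)) o := hN₃ m s hm (le_max_left _ _)
      have h2 : dn - 8 * δ - 2 * ε' ≤ gromovProd (L (-s)) ((A ^ n) o) o := by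
        rw [gp_comm]; exact hmall s (le_max_right _ _)
      have h4 := four_point hδ hgeo hhyp o ((A⁻¹ ^ m) o) (L (-s)) ((A ^ n) o)
      have hminb : dn - 8 * δ - 2 * ε' ≤ min (gromovProd ((A⁻¹ ^ m) o) (L (-s)) o)
          (gromovProd (L (-s)) ((A ^ n) o) o) := le_min (by linarith) h2
      have hpair : dn - 11 * δ - 2 * ε' ≤ gromovProd ((A⁻¹ ^ m) o) ((A ^ n) o) o := by
        linarith
      have hident : gromovProd ((A⁻¹ ^ m) o) ((A ^ n) o) o
          = (dist ((A ^ m) o) o + dn - dist ((A ^ (m + n)) o) o) / 2 := by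
        simp only [gromovProd]
        rw [dist_comm o ((A⁻¹ ^ m) o), dist_inv_pow, dist_comm o ((A ^ n) o), ← hdn,
          dist_mixed]
      rw [hident] at hpair
      linarith
    have hγ : 0 < dn - 22 * δ - 4 * ε' := by
      have h6 : 23 * δ + 6 * ε' ≤ dn := by
        rw [hε']
        have := hn
        have := hdnlA
        linarith
      linarith
    set m₀ : ℕ := ⌈N₃⌉₊ with hm₀
    have hm₀N₃ : N₃ ≤ (m₀ : ℝ) := Nat.le_ceil _
    have hiter : ∀ jj : ℕ, dist ((A ^ (m₀ + jj * n)) o) o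
        ≤ dist ((A ^ m₀) o) o - (jj : ℝ) * (dn - 22 * δ - 4 * ε') := by
      intro jj
      induction jj with
      | zero => simp
      | succ jj ih =>
        have hge : N₃ ≤ ((m₀ + jj * n : ℕ) : ℝ) := by
          push_cast
          have h1 : (0:ℝ) ≤ (jj : ℝ) * (n : ℝ) := by positivity
          linarith [hm₀N₃]
        have hstep := hdec (m₀ + jj * n) hge
        have harith : m₀ + (jj + 1) * n = m₀ + jj * n + n := by ring
        rw [harith]
        push_cast
        push_cast at ih
        linarith [hstep]
    set jbig : ℕ := ⌈(dist ((A ^ m₀) o) o + 1) / (dn - 22 * δ - 4 * ε')⌉₊ with hjbig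
    have hjb : (dist ((A ^ m₀) o) o + 1) / (dn - 22 * δ - 4 * ε') ≤ (jbig : ℝ) :=
      Nat.le_ceil _
    have hjγ : dist ((A ^ m₀) o) o + 1 ≤ (jbig : ℝ) * (dn - 22 * δ - 4 * ε') := by
      rw [div_le_iff₀ hγ] at hjb; linarith
    linarith [dist_nonneg (x := (A ^ (m₀ + jbig * n)) o) (y := o), hiter jbig, hjγ]

end FareyAux

open FareyAux

set_option maxHeartbeats 1000000

/-- Growth of the lengths of the Farey neighbours. Let `A` be a hyperbolic
isometry, `L_A` a geodesic from `A⁻` to `A⁺` with `o = L_A 0`, `B` an isometry, and `M`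
a geodesic line from `A⁻` to `B(A⁺)` (encoded via Gromov products at `o`). Let `p(o)` be
a projection of `o` on `M`. With `k = 3 d(Bo,o) + 2 d(p(o),o) + 36δ` and
`N = (1/l_S(A)) · max{4 d(Bo,o) + 3 d(p(o),o) + 51δ, 2 d(Bo,o) + 4 d(p(o),o) + 5δ}`,
for every integer `n ≥ N` one has `l_S(B Aⁿ) ≥ n l_S(A) − k`. -/
theorem stable_norm_BAn_linear_growth
    {X : Type*} [MetricSpace X] (δ : ℝ) (hδ : 0 ≤ δ)
    (hgeo : GeodesicMetricSpace X) (hhyp : RipsHyperbolic X δ)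
    (A B : X ≃ᵢ X) (LA : ℝ → X) (hLA : IsGeodesicFromTo A LA)
    (o : X) (ho : o = LA 0)
    (lA : ℝ)
    (hlA : Tendsto (fun n : ℕ => dist ((A ^ n) o) o / n) atTop (𝓝 lA)) (hlA0 : 0 < lA)
    (M : ℝ → X) (hM : IsGeodesicLine M)
    (hMneg : ∀ K : ℝ, ∃ N : ℝ, ∀ (n : ℕ) (t : ℝ), N ≤ (n : ℝ) → N ≤ t →
      K ≤ gromovProd ((A⁻¹ ^ n) o) (M (-t)) o)
    (hMpos : ∀ K : ℝ, ∃ N : ℝ, ∀ (n : ℕ) (t : ℝ), N ≤ (n : ℝ) → N ≤ t →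
      K ≤ gromovProd (B ((A ^ n) o)) (M t) o)
    (po : X) (hpo : po ∈ Set.range M)
    (hpoproj : dist o po = infDist o (Set.range M))
    (lBA : ℕ → ℝ)
    (hlBA : ∀ n : ℕ,
      Tendsto (fun m : ℕ => dist (((B * A ^ n) ^ m) o) o / m) atTop (𝓝 (lBA n))) :
    ∀ n : ℕ,
      (1 / lA) * max (4 * dist (B o) o + 3 * dist po o + 51 * δ)
          (2 * dist (B o) o + 4 * dist po o + 5 * δ) ≤ (n : ℝ) →
      (n : ℝ) * lA - (3 * dist (B o) o + 2 * dist po o + 36 * δ) ≤ lBA n := by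
  intro n hn
  set β := dist (B o) o with hβ
  set P := dist po o with hP
  have hβ0 : 0 ≤ β := dist_nonneg
  have hP0 : 0 ≤ P := dist_nonneg
  have hlAne : lA ≠ 0 := ne_of_gt hlA0
  have hmax : max (4 * β + 3 * P + 51 * δ) (2 * β + 4 * P + 5 * δ) ≤ (n : ℝ) * lA := by
    have h := mul_le_mul_of_nonneg_right hn hlA0.le
    have he : 1 / lA * max (4 * β + 3 * P + 51 * δ) (2 * β + 4 * P + 5 * δ) * lA
        = max (4 * β + 3 * P + 51 * δ) (2 * β + 4 * P + 5 * δ) := by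
      field_simp
    rwa [he] at h
  have h51 : 4 * β + 3 * P + 51 * δ ≤ (n : ℝ) * lA := le_trans (le_max_left _ _) hmax
  rcases Nat.eq_zero_or_pos n with rfl | hn1
  · have h0 : (0 : ℝ) ≤ lBA 0 := by
      refine ge_of_tendsto (hlBA 0) ?_
      filter_upwards with m
      positivity
    push_cast
    linarith
  have hn1' : (1 : ℝ) ≤ (n : ℝ) := by exact_mod_cast hn1
  have hnlA : lA ≤ (n : ℝ) * lA := le_mul_of_one_le_left hlA0.le hn1'
  have havg : 3 * β + (9/4) * P + (153/4) * δ + lA / 4 ≤ (n : ℝ) * lA := by linarith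
  obtain ⟨hlineLA, hLApos, hLAneg⟩ := hLA
  have hFekA : ∀ k : ℕ, (k : ℝ) * lA ≤ dist ((A ^ k) o) o := fekete A o lA hlA
  have Hpos' : ∀ K : ℝ, ∃ N : ℝ, ∀ (k : ℕ) (r : ℝ), N ≤ (k : ℝ) → N ≤ r →
      K ≤ gromovProd ((A ^ k) o) (LA r) o := by
    intro K
    obtain ⟨N, hN⟩ := hLApos K
    refine ⟨N, fun k r hk hr => ?_⟩
    have := hN k r hk hr
    rwa [← ho] at this
  have Hneg' : ∀ K : ℝ, ∃ N : ℝ, ∀ (k : ℕ) (r : ℝ), N ≤ (k : ℝ) → N ≤ r →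
      K ≤ gromovProd ((A⁻¹ ^ k) o) (LA (-r)) o := by
    intro K
    obtain ⟨N, hN⟩ := hLAneg K
    refine ⟨N, fun k r hk hr => ?_⟩
    have := hN k r hk hr
    rwa [← ho] at this
  set g := B * A ^ n with hg
  have hBBinv : B (B⁻¹ o) = o := by
    rw [mulApply_eq (show B * B⁻¹ = 1 by group)]; rfl
  have hβ' : dist o (B⁻¹ o) = β := by
    have h := B.dist_eq o (B⁻¹ o)
    rw [hBBinv] at h
    rw [← h, hβ]
  -- ============ bound on the Gromov product c ============
  have hcb : gromovProd (g o) (g⁻¹ o) o ≤ β + P + 2 * δ := by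
    refine le_of_forall_pos_le_add fun η hη => ?_
    set εt := min η (lA / 4) with hεt
    have hεt0 : 0 < εt := lt_min hη (by positivity)
    have hεtlA : εt ≤ lA / 4 := min_le_right _ _
    have hεtη : εt ≤ η := min_le_left _ _
    set ε₀ := εt / 4 with hε₀
    have hε₀0 : 0 < ε₀ := by positivity
    have hε₀lA : ε₀ ≤ lA / 16 := by rw [hε₀]; linarith
    have hcond : 23 * δ + 3 * ε₀ ≤ (n : ℝ) * lA := by linarith
    obtain ⟨Rp, hRp⟩ := D3 hδ hgeo hhyp A LA hlineLA o ho.symm lA hFekA Hpos' Hneg'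
      n ε₀ hε₀0 hcond
    -- mirrored D3
    have hline' : IsGeodesicLine (fun s => LA (-s)) := by
      intro s t
      show dist (LA (-s)) (LA (-t)) = |s - t|
      rw [hlineLA (-s) (-t), show -s - -t = -(s - t) by ring, abs_neg]
    have hFekA' : ∀ k : ℕ, (k : ℝ) * lA ≤ dist ((A⁻¹ ^ k) o) o := fun k => by
      rw [dist_inv_pow]; exact hFekA k
    have Hpos'' : ∀ K : ℝ, ∃ N : ℝ, ∀ (k : ℕ) (r : ℝ), N ≤ (k : ℝ) → N ≤ r →
        K ≤ gromovProd ((A⁻¹ ^ k) o) ((fun s => LA (-s)) r) o := by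
      intro K
      obtain ⟨N, hN⟩ := Hneg' K
      exact ⟨N, fun k r hk hr => hN k r hk hr⟩
    have Hneg'' : ∀ K : ℝ, ∃ N : ℝ, ∀ (k : ℕ) (r : ℝ), N ≤ (k : ℝ) → N ≤ r →
        K ≤ gromovProd (((A⁻¹)⁻¹ ^ k) o) ((fun s => LA (-s)) (-r)) o := by
      intro K
      obtain ⟨N, hN⟩ := Hpos' K
      refine ⟨N, fun k r hk hr => ?_⟩
      show K ≤ gromovProd (((A⁻¹)⁻¹ ^ k) o) (LA (- -r)) o
      rw [inv_inv, neg_neg]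
      exact hN k r hk hr
    have hL'0 : (fun s => LA (-s)) 0 = o := by
      show LA (-0) = o
      rw [neg_zero]; exact ho.symm
    obtain ⟨Rm, hRm⟩ := D3 hδ hgeo hhyp A⁻¹ (fun s => LA (-s)) hline' o hL'0 lA hFekA'
      Hpos'' Hneg'' n ε₀ hε₀0 hcond
    have hRm' : ∀ r : ℝ, Rm ≤ r →
        (n : ℝ) * lA - 8 * δ - ε₀ ≤ gromovProd ((A⁻¹ ^ n) o) (LA (-r)) o :=
      fun r hr => hRm r hr
    -- ===== positive side bound Π₊ =====
    obtain ⟨N₄, hN₄⟩ := Hpos' ((n : ℝ) * lA)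
    obtain ⟨N₅, hN₅⟩ := hMpos ((n : ℝ) * lA)
    set m₂ : ℕ := ⌈max N₄ N₅⌉₊ with hm₂
    have hm₂4 : N₄ ≤ (m₂ : ℝ) := le_trans (le_max_left _ _) (Nat.le_ceil _)
    have hm₂5 : N₅ ≤ (m₂ : ℝ) := le_trans (le_max_right _ _) (Nat.le_ceil _)
    set r₂ := max Rp N₄ with hr₂
    have hgpAn : (n : ℝ) * lA - 11 * δ - ε₀ ≤ gromovProd ((A ^ n) o) ((A ^ m₂) o) o := by
      have h1 := hRp r₂ (le_max_left _ _)
      have h2 : (n : ℝ) * lA ≤ gromovProd (LA r₂) ((A ^ m₂) o) o := by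
        rw [gp_comm]; exact hN₄ m₂ r₂ hm₂4 (le_max_right _ _)
      have h4 := four_point hδ hgeo hhyp o ((A ^ n) o) (LA r₂) ((A ^ m₂) o)
      have hmin : (n : ℝ) * lA - 8 * δ - ε₀ ≤ min (gromovProd ((A ^ n) o) (LA r₂) o)
          (gromovProd (LA r₂) ((A ^ m₂) o) o) := le_min h1 (by linarith)
      linarith
    have hPiPlus : ∀ t : ℝ, N₅ ≤ t →
        (n : ℝ) * lA - β - 14 * δ - ε₀ ≤ gromovProd (g o) (M t) o := by
      intro t ht
      have hiso := gp_isom B ((A ^ n) o) ((A ^ m₂) o) (B⁻¹ o)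
      rw [hBBinv] at hiso
      have hb := gp_base ((A ^ n) o) ((A ^ m₂) o) o (B⁻¹ o)
      have h1 : (n : ℝ) * lA - 11 * δ - ε₀ - β
          ≤ gromovProd (B ((A ^ n) o)) (B ((A ^ m₂) o)) o := by
        rw [hiso]
        linarith
      have h2 := hN₅ m₂ t hm₂5 ht
      have h4 := four_point hδ hgeo hhyp o (B ((A ^ n) o)) (B ((A ^ m₂) o)) (M t)
      have hmin : (n : ℝ) * lA - β - 11 * δ - ε₀
          ≤ min (gromovProd (B ((A ^ n) o)) (B ((A ^ m₂) o)) o)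
            (gromovProd (B ((A ^ m₂) o)) (M t) o) := le_min (by linarith) (by linarith)
      have hgoeq : g o = B ((A ^ n) o) := rfl
      rw [hgoeq]
      linarith
    -- ===== negative side bound Π₋ =====
    obtain ⟨N₆, hN₆⟩ := Hneg' ((n : ℝ) * lA)
    obtain ⟨N₇, hN₇⟩ := hMneg ((n : ℝ) * lA)
    set m₃ : ℕ := ⌈max N₆ N₇⌉₊ with hm₃
    have hm₃6 : N₆ ≤ (m₃ : ℝ) := le_trans (le_max_left _ _) (Nat.le_ceil _)
    have hm₃7 : N₇ ≤ (m₃ : ℝ) := le_trans (le_max_right _ _) (Nat.le_ceil _)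
    set r₃ := max Rm N₆ with hr₃
    have hgpAn' : (n : ℝ) * lA - 11 * δ - ε₀
        ≤ gromovProd ((A⁻¹ ^ n) o) ((A⁻¹ ^ m₃) o) o := by
      have h1 := hRm' r₃ (le_max_left _ _)
      have h2 : (n : ℝ) * lA ≤ gromovProd (LA (-r₃)) ((A⁻¹ ^ m₃) o) o := by
        rw [gp_comm]; exact hN₆ m₃ r₃ hm₃6 (le_max_right _ _)
      have h4 := four_point hδ hgeo hhyp o ((A⁻¹ ^ n) o) (LA (-r₃)) ((A⁻¹ ^ m₃) o)
      have hmin : (n : ℝ) * lA - 8 * δ - ε₀ ≤ min (gromovProd ((A⁻¹ ^ n) o) (LA (-r₃)) o)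
          (gromovProd (LA (-r₃)) ((A⁻¹ ^ m₃) o) o) := le_min h1 (by linarith)
      linarith
    have hPiMinus : ∀ s : ℝ, N₇ ≤ s →
        (n : ℝ) * lA - 14 * δ - ε₀ ≤ gromovProd ((A⁻¹ ^ n) o) (M (-s)) o := by
      intro s hs
      have h2 := hN₇ m₃ s hm₃7 hs
      have h4 := four_point hδ hgeo hhyp o ((A⁻¹ ^ n) o) ((A⁻¹ ^ m₃) o) (M (-s))
      have hmin : (n : ℝ) * lA - 11 * δ - ε₀
          ≤ min (gromovProd ((A⁻¹ ^ n) o) ((A⁻¹ ^ m₃) o) o)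
            (gromovProd ((A⁻¹ ^ m₃) o) (M (-s)) o) := le_min hgpAn' (by linarith)
      linarith
    -- ===== the final thin quadrilateral =====
    obtain ⟨u₀, hu₀⟩ := hpo
    set s₀ := max N₇ |u₀| with hs₀
    set t₀ := max N₅ |u₀| with ht₀
    have habs : 0 ≤ |u₀| := abs_nonneg u₀
    have hs₀0 : 0 ≤ s₀ := le_trans habs (le_max_right _ _)
    have ht₀0 : 0 ≤ t₀ := le_trans habs (le_max_right _ _)
    have hseg_f := line_seg hM (show -s₀ ≤ t₀ by linarith)
    obtain ⟨gs, hgs⟩ := hgeo (M t₀) ((A⁻¹ ^ n) o)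
    obtain ⟨hsg, hhsg⟩ := hgeo ((A⁻¹ ^ n) o) (M (-s₀))
    have hdM : dist (M (-s₀)) (M t₀) = t₀ + s₀ := by
      rw [line_dist hM (show -s₀ ≤ t₀ by linarith)]; ring
    have hmem : u₀ + s₀ ∈ Set.Icc (0:ℝ) (dist (M (-s₀)) (M t₀)) := by
      rw [hdM]
      constructor
      · linarith [neg_abs_le u₀, le_max_right N₇ |u₀|]
      · linarith [le_abs_self u₀, le_max_right N₅ |u₀|]
    obtain ⟨q, hq, hqd⟩ := near_pt hhyp hseg_f hgs hhsg hmem hε₀0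
    have hfpo : M (u₀ + s₀ + -s₀) = po := by
      rw [show u₀ + s₀ + -s₀ = u₀ by ring]; exact hu₀
    rw [hfpo] at hqd
    have hdopo : dist o po = P := by rw [hP, dist_comm]
    rcases hq with ⟨σ, hσ, rfl⟩ | ⟨u, hu, rfl⟩
    · -- q = gs σ on the diagonal [M t₀, A⁻ⁿ o]
      obtain ⟨g₂, hg₂⟩ := hgeo ((A⁻¹ ^ n) o) (g o)
      obtain ⟨h₂, hh₂⟩ := hgeo (g o) (M t₀)
      obtain ⟨q₂, hq₂, hq₂d⟩ := near_pt hhyp hgs hg₂ hh₂ hσ hε₀0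
      rcases hq₂ with ⟨v, hv, rfl⟩ | ⟨v, hv, rfl⟩
      · -- q₂ on [A⁻ⁿ o, g o] : the good case
        have hle := gp_le_seg hg₂ hv o
        have htri1 := dist_triangle o po (gs σ)
        have htri2 := dist_triangle o (gs σ) (g₂ v)
        have hgv : gromovProd ((A⁻¹ ^ n) o) (g o) o ≤ P + 2 * δ + 2 * ε₀ := by
          linarith
        have hend := gp_endpoint (g o) (g⁻¹ o) ((A⁻¹ ^ n) o) o
        have hdinv : dist (g⁻¹ o) ((A⁻¹ ^ n) o) = β := by
          have h1 : g⁻¹ o = (A⁻¹ ^ n) (B⁻¹ o) :=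
            (mulApply_eq (show (A⁻¹ ^ n) * B⁻¹ = g⁻¹ by rw [hg]; group) o).symm
          rw [h1, (A⁻¹ ^ n).dist_eq (B⁻¹ o) o, dist_comm]
          exact hβ'
        have hcomm2 : gromovProd (g o) ((A⁻¹ ^ n) o) o
            = gromovProd ((A⁻¹ ^ n) o) (g o) o := gp_comm _ _ _
        rw [hdinv, hcomm2] at hend
        linarith
      · -- q₂ on [g o, M t₀] : excluded by Π₊
        exfalso
        have hle := gp_le_seg hh₂ hv o
        have hPip := hPiPlus t₀ (le_max_left _ _)
        have htri1 := dist_triangle o po (gs σ)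
        have htri2 := dist_triangle o (gs σ) (h₂ v)
        linarith
    · -- q = hsg u on [A⁻ⁿ o, M (-s₀)] : excluded by Π₋
      exfalso
      have hle := gp_le_seg hhsg hu o
      have hPim := hPiMinus s₀ (le_max_left _ _)
      have htri := dist_triangle o po (hsg u)
      linarith
  -- ============ conclusion via the chain lemma ============
  have hc0 : 0 ≤ gromovProd (g o) (g⁻¹ o) o := gp_nonneg _ _ _
  have hD : (n : ℝ) * lA - β ≤ dist (g o) o := by
    have he : dist (B ((A ^ n) o)) (B o) = dist ((A ^ n) o) o := B.dist_eq _ _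
    have h2 := dist_triangle (B ((A ^ n) o)) o (B o)
    have h3 : dist o (B o) = β := by rw [hβ, dist_comm]
    have h4 := hFekA n
    have key : dist (g o) o = dist (B ((A ^ n) o)) o := rfl
    rw [key]
    linarith
  have hcond2 : 2 * gromovProd (g o) (g⁻¹ o) o + 6 * δ < dist (g o) o := by
    linarith
  have hchain := chain hδ hgeo hhyp g o hcond2
  refine ge_of_tendsto (hlBA n) ?_
  filter_upwards [eventually_ge_atTop 1] with m hm
  have hch := hchain m hm
  have hm' : (1 : ℝ) ≤ (m : ℝ) := by exact_mod_cast hm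
  have hmpos : (0 : ℝ) < (m : ℝ) := by linarith
  rw [le_div_iff₀ hmpos]
  have e1 : (m : ℝ) * ((n : ℝ) * lA - β) ≤ (m : ℝ) * dist (g o) o :=
    mul_le_mul_of_nonneg_left hD (by linarith)
  have e2 : ((m : ℝ) - 1) * (gromovProd (g o) (g⁻¹ o) o + 3 * δ)
      ≤ ((m : ℝ) - 1) * (β + P + 5 * δ) :=
    mul_le_mul_of_nonneg_left (by linarith) (by linarith)
  have e3 : δ ≤ (m : ℝ) * δ := le_mul_of_one_le_left hδ hm'
  nlinarith [hch, e1, e2, e3, hδ, hβ0, hP0]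
end

section
/- Let X be a geodesic δ-hyperbolic metric space. Let A be a hyperbolic isometry of X, let L : ℝ → X be a geodesic from A⁻ to A⁺, and set o = L(0). Let B be an isometry of X with B(A⁺) = A⁻, encoded by: the Gromov products (B Aⁿ o | A⁻ᵐ o)_o tend to +∞ as min(n,m) → +∞. Set N = (1 / l_S(A)) · max{ 3·d(Bo, o) + 18δ , 5·d(Bo, o) + 10δ }. Then for every integer n ≥ N: l_S(Aⁿ B) ≤ 30δ. -/
open Metric Filter Set Topology

/-!
A sequence and a curve converge to the same point of the Gromov boundary when their Gromov
products tend to `+∞`; the four-point condition makes this relation transitive, so every `Aᵐ`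
fixes both ends of `L`, and `B` carries the positive end of `L` to its negative end. Thin
quadrilaterals then put `Aᵐ ∘ L` in the `2δ`-neighbourhood of `L`, on which `Aⁿ` acts as a coarse
translation towards `A⁺` by about `τ = d(Aⁿo, o) ≥ n·l_S(A)`, and they put `B (L s)`,
`s ≥ d(Bo, o)`, within `4δ` of the negative half of `L`. Hence `AⁿB` maps `L s` within `6δ` of
a point `L (Q s)`, where `Q` is coarsely `1`-Lipschitz, bounded above, and `Q s ≥ s` at
`s = d(Bo, o)` as soon as `τ ≥ 3 d(Bo, o) + 16δ`. A discrete intermediate value argument gives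
points moved by at most `18δ + 2h` for every `h > 0`, and the stable norm is bounded by every
displacement.
-/

section GromovProduct

variable {X : Type*} [MetricSpace X]

theorem gromovProd_comm (x y w : X) : gromovProd x y w = gromovProd y x w := by
  unfold gromovProd; rw [dist_comm x y]; ring

theorem gromovProd_map (e : X ≃ᵢ X) (x y w : X) :
    gromovProd (e x) (e y) (e w) = gromovProd x y w := by
  simp only [gromovProd, e.dist_eq]

theorem gromovProd_sub_dist_le (x y w w' : X) :
    gromovProd x y w - dist w w' ≤ gromovProd x y w' := by
  have := dist_triangle w w' x
  have := dist_triangle w w' y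
  unfold gromovProd
  linarith

theorem gromovProd_le_add_dist_left (x x' y w : X) :
    gromovProd x y w ≤ gromovProd x' y w + dist x x' := by
  have := dist_triangle w x' x
  have := dist_triangle x' x y
  unfold gromovProd
  rw [dist_comm x' x] at *
  linarith

theorem IsGeodesicSegment.dist_left {x y : X} {f : ℝ → X} (hf : IsGeodesicSegment x y f)
    {s : ℝ} (hs : s ∈ Icc 0 (dist x y)) : dist x (f s) = s := by
  rw [← hf.1, hf.2.2 0 ⟨le_rfl, dist_nonneg⟩ s hs, abs_sub_comm, sub_zero, abs_of_nonneg hs.1]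

theorem IsGeodesicSegment.dist_right {x y : X} {f : ℝ → X} (hf : IsGeodesicSegment x y f)
    {s : ℝ} (hs : s ∈ Icc 0 (dist x y)) : dist (f s) y = dist x y - s := by
  conv_lhs => rw [← hf.2.1]
  rw [hf.2.2 s hs _ ⟨dist_nonneg, le_rfl⟩, abs_sub_comm, abs_of_nonneg (sub_nonneg.2 hs.2)]

theorem IsGeodesicSegment.dist_add_dist {x y q : X} {f : ℝ → X} (hf : IsGeodesicSegment x y f)
    (hq : q ∈ f '' Icc 0 (dist x y)) : dist x q + dist q y = dist x y := by
  obtain ⟨s, hs, rfl⟩ := hq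
  rw [hf.dist_left hs, hf.dist_right hs]
  ring

theorem IsGeodesicSegment.gromovProd_le_dist {x y q : X} {f : ℝ → X}
    (hf : IsGeodesicSegment x y f) (hq : q ∈ f '' Icc 0 (dist x y)) (w : X) :
    gromovProd x y w ≤ dist w q := by
  have := hf.dist_add_dist hq
  have := dist_triangle w q x
  have := dist_triangle w q y
  unfold gromovProd
  rw [dist_comm q x] at *
  linarith

theorem IsGeodesicSegment.continuousOn {x y : X} {f : ℝ → X} (hf : IsGeodesicSegment x y f) :
    ContinuousOn f (Icc 0 (dist x y)) :=
  (LipschitzOnWith.of_dist_le_mul (K := 1) fun s hs t ht => by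
    simp [hf.2.2 s hs t ht, Real.dist_eq]).continuousOn

end GromovProduct

section Hyperbolic

variable {X : Type*} [MetricSpace X] {δ : ℝ}

theorem RipsHyperbolic.exists_dist_le (hhyp : RipsHyperbolic X δ) {x y z : X} {f g h : ℝ → X}
    (hf : IsGeodesicSegment x y f) (hg : IsGeodesicSegment y z g) (hh : IsGeodesicSegment z x h)
    {s : ℝ} (hs : s ∈ Icc 0 (dist x y)) :
    ∃ q ∈ g '' Icc 0 (dist y z) ∪ h '' Icc 0 (dist z x), dist (f s) q ≤ δ := by
  have hK := (isCompact_Icc.image_of_continuousOn hg.continuousOn).union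
    (isCompact_Icc.image_of_continuousOn hh.continuousOn)
  obtain ⟨q, hq, hdist⟩ := hK.exists_infDist_eq_dist
    ⟨g 0, Or.inl ⟨0, ⟨le_rfl, dist_nonneg⟩, rfl⟩⟩ (f s)
  exact ⟨q, hq, hdist ▸ hhyp x y z f g h hf hg hh s hs⟩

theorem RipsHyperbolic.exists_dist_le_gromovProd_add (hgeo : GeodesicMetricSpace X)
    (hhyp : RipsHyperbolic X δ) {x z : X} {f : ℝ → X} (hf : IsGeodesicSegment x z f) (w : X) :
    ∃ p ∈ f '' Icc 0 (dist x z), dist w p ≤ gromovProd x z w + 2 * δ := by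
  -- the internal point of the tripod of `x, z, w` on the side `[x, z]`
  obtain ⟨s, hs_def⟩ : ∃ s, s = gromovProd z w x := ⟨_, rfl⟩
  unfold gromovProd at hs_def ⊢
  have hs : s ∈ Icc 0 (dist x z) := by
    constructor <;> linarith [dist_triangle z x w, dist_triangle x z w, dist_comm x z]
  obtain ⟨g, hg⟩ := hgeo z w
  obtain ⟨h, hh⟩ := hgeo w x
  obtain ⟨q, hq, hpq⟩ := hhyp.exists_dist_le hf hg hh hs
  refine ⟨f s, ⟨s, hs, rfl⟩, ?_⟩
  have hxp := hf.dist_left hs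
  have hpz := hf.dist_right hs
  have hwp := dist_triangle w q (f s)
  rw [dist_comm q (f s)] at hwp
  rcases hq with hq | hq
  · have := hg.dist_add_dist hq
    have := dist_triangle z q (f s)
    rw [dist_comm q (f s), dist_comm q w, dist_comm z (f s)] at *
    linarith [dist_comm w x, dist_comm w z, dist_comm x z]
  · have := hh.dist_add_dist hq
    have := dist_triangle x q (f s)
    rw [dist_comm q (f s), dist_comm q x] at *
    linarith [dist_comm w x, dist_comm w z, dist_comm x z]

theorem RipsHyperbolic.min_sub_le_gromovProd (hgeo : GeodesicMetricSpace X)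
    (hhyp : RipsHyperbolic X δ) (x y z w : X) :
    min (gromovProd x y w) (gromovProd y z w) - 3 * δ ≤ gromovProd x z w := by
  obtain ⟨f, hf⟩ := hgeo x z
  obtain ⟨_, ⟨s, hs, rfl⟩, hwp⟩ := hhyp.exists_dist_le_gromovProd_add hgeo hf w
  obtain ⟨g, hg⟩ := hgeo z y
  obtain ⟨h, hh⟩ := hgeo y x
  obtain ⟨q, hq, hpq⟩ := hhyp.exists_dist_le hf hg hh hs
  have hwq := dist_triangle w (f s) q
  rcases hq with hq | hq
  · have := hg.gromovProd_le_dist hq w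
    rw [gromovProd_comm z y] at this
    linarith [min_le_right (gromovProd x y w) (gromovProd y z w)]
  · have := hh.gromovProd_le_dist hq w
    rw [gromovProd_comm y x] at this
    linarith [min_le_left (gromovProd x y w) (gromovProd y z w)]

/-- Geodesic quadrilaterals are `2δ`-thin, and the Gromov products exclude the sides `[y₁, x₁]`
and `[y₂, x₂]`. -/
theorem RipsHyperbolic.exists_dist_le_of_quadrilateral (hgeo : GeodesicMetricSpace X)
    (hhyp : RipsHyperbolic X δ) {y₁ y₂ x₁ x₂ : X} {f k : ℝ → X}
    (hf : IsGeodesicSegment y₁ y₂ f) (hk : IsGeodesicSegment x₁ x₂ k)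
    {s : ℝ} (hs : s ∈ Icc 0 (dist y₁ y₂))
    (h₁ : 2 * δ < gromovProd y₁ x₁ (f s)) (h₂ : 2 * δ < gromovProd y₂ x₂ (f s)) :
    ∃ r ∈ Icc 0 (dist x₁ x₂), dist (f s) (k r) ≤ 2 * δ := by
  obtain ⟨g, hg⟩ := hgeo y₂ x₂
  obtain ⟨e, he⟩ := hgeo x₂ y₁
  obtain ⟨q, hq, hzq⟩ := hhyp.exists_dist_le hf hg he hs
  have hδ : 0 ≤ δ := dist_nonneg.trans hzq
  rcases hq with hq | ⟨r, hr, rfl⟩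
  · linarith [hg.gromovProd_le_dist hq (f s)]
  obtain ⟨e', he'⟩ := hgeo y₁ x₁
  obtain ⟨q', hq', hqq'⟩ := hhyp.exists_dist_le he he' hk hr
  have hzq' : dist (f s) q' ≤ 2 * δ := by linarith [dist_triangle (f s) (e r) q']
  rcases hq' with hq' | ⟨r', hr', rfl⟩
  · linarith [he'.gromovProd_le_dist hq' (f s)]
  exact ⟨r', hr', hzq'⟩

end Hyperbolic

section GeodesicLine

variable {X : Type*} [MetricSpace X] {L : ℝ → X}

theorem IsGeodesicLine.dist_eq_sub (hL : IsGeodesicLine L) {a b : ℝ} (hab : a ≤ b) :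
    dist (L a) (L b) = b - a := by
  rw [hL, abs_sub_comm, abs_of_nonneg (sub_nonneg.2 hab)]

theorem IsGeodesicLine.isGeodesicSegment (hL : IsGeodesicLine L) {a b : ℝ} (hab : a ≤ b) :
    IsGeodesicSegment (L a) (L b) (fun t => L (a + t)) := by
  refine ⟨by simp, by simp [hL.dist_eq_sub hab], fun s _ t _ => ?_⟩
  rw [hL, add_sub_add_left_eq_sub]

theorem IsGeodesicLine.comp_neg (hL : IsGeodesicLine L) : IsGeodesicLine (fun t => L (-t)) :=
  fun s t => by rw [hL, neg_sub_neg, abs_sub_comm]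

theorem IsGeodesicLine.isometry_comp {Y : Type*} [MetricSpace Y] (hL : IsGeodesicLine L)
    {e : X → Y} (he : Isometry e) : IsGeodesicLine (fun t => e (L t)) :=
  fun s t => by rw [he.dist_eq, hL]

theorem IsGeodesicLine.isGeodesicRay (hL : IsGeodesicLine L) : IsGeodesicRay L :=
  fun s t _ _ => hL s t

theorem IsGeodesicRay.dist_zero_eq {R : ℝ → X} (hR : IsGeodesicRay R) {b : ℝ} (hb : 0 ≤ b) :
    dist (R 0) (R b) = b := by
  rw [hR 0 b le_rfl hb, zero_sub, abs_neg, abs_of_nonneg hb]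

theorem IsGeodesicRay.isGeodesicSegment {R : ℝ → X} (hR : IsGeodesicRay R) {b : ℝ}
    (hb : 0 ≤ b) : IsGeodesicSegment (R 0) (R b) R :=
  ⟨rfl, by rw [hR.dist_zero_eq hb], fun s hs t ht => hR s t hs.1 ht.1⟩

theorem IsGeodesicLine.gromovProd_le_max (hL : IsGeodesicLine L) (a : ℝ) {t : ℝ} (ht : 0 ≤ t) :
    gromovProd (L a) (L t) (L 0) ≤ max a 0 := by
  unfold gromovProd
  rw [hL, hL, hL, zero_sub, zero_sub, abs_neg, abs_neg, abs_of_nonneg ht]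
  rcases le_total a 0 with ha | ha
  · rw [abs_of_nonpos ha, abs_of_nonpos (by linarith : a - t ≤ 0)]; linarith [le_max_right a 0]
  · rw [abs_of_nonneg ha]; linarith [le_max_left a 0, neg_le_abs (a - t)]

end GeodesicLine

/-- `x` along `la` and `y` along `lb` converge to the same point of the Gromov boundary. -/
def GromovAsymptotic {X α β : Type*} [MetricSpace X] (x : α → X) (la : Filter α) (y : β → X)
    (lb : Filter β) : Prop :=
  ∀ w : X, Tendsto (fun p : α × β => gromovProd (x p.1) (y p.2) w) (la ×ˢ lb) atTop

namespace GromovAsymptotic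

variable {X α β γ κ : Type*} [MetricSpace X] {x : α → X} {y : β → X} {z : γ → X}
  {la : Filter α} {lb : Filter β} {lc : Filter γ}

theorem of_tendsto {w : X}
    (h : Tendsto (fun p : α × β => gromovProd (x p.1) (y p.2) w) (la ×ˢ lb) atTop) :
    GromovAsymptotic x la y lb := fun w' =>
  tendsto_atTop_mono (fun p => by linarith [gromovProd_sub_dist_le (x p.1) (y p.2) w w'])
    (tendsto_atTop_add_const_right _ (-dist w w') h)

theorem of_forall_exists {u : α → ℝ} {v : β → ℝ} (hu : Tendsto u la atTop)
    (hv : Tendsto v lb atTop) {w : X}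
    (h : ∀ M : ℝ, ∃ N : ℝ, ∀ a b, N ≤ u a → N ≤ v b → M ≤ gromovProd (x a) (y b) w) :
    GromovAsymptotic x la y lb :=
  of_tendsto <| tendsto_atTop.2 fun M => by
    obtain ⟨N, hN⟩ := h M
    filter_upwards [(hu.eventually_ge_atTop N).prod_mk (hv.eventually_ge_atTop N)] with ⟨a, b⟩ hp
    exact hN a b hp.1 hp.2

theorem symm (h : GromovAsymptotic x la y lb) : GromovAsymptotic y lb x la := fun w =>
  ((h w).comp tendsto_prod_swap).congr fun _ => gromovProd_comm _ _ _

theorem comp (h : GromovAsymptotic x la y lb) {φ : γ → α} (hφ : Tendsto φ lc la) {ψ : κ → β}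
    {lk : Filter κ} (hψ : Tendsto ψ lk lb) :
    GromovAsymptotic (fun c => x (φ c)) lc (fun d => y (ψ d)) lk := fun w =>
  (h w).comp (hφ.prodMap hψ)

theorem map (h : GromovAsymptotic x la y lb) (e : X ≃ᵢ X) :
    GromovAsymptotic (fun a => e (x a)) la (fun b => e (y b)) lb := fun w =>
  (h (e.symm w)).congr fun p => by rw [← gromovProd_map e, e.apply_symm_apply]

theorem trans {δ : ℝ} (hgeo : GeodesicMetricSpace X) (hhyp : RipsHyperbolic X δ) [lb.NeBot]
    (hxy : GromovAsymptotic x la y lb) (hyz : GromovAsymptotic y lb z lc) :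
    GromovAsymptotic x la z lc := fun w =>
  tendsto_atTop.2 fun M => by
    obtain ⟨P, hP, Q, hQ, hPQ⟩ := eventually_prod_iff.1 ((hxy w).eventually_ge_atTop (M + 3 * δ))
    obtain ⟨Q', hQ', R, hR, hQR⟩ := eventually_prod_iff.1 ((hyz w).eventually_ge_atTop (M + 3 * δ))
    obtain ⟨b, hb, hb'⟩ := (hQ.and hQ').exists
    filter_upwards [hP.prod_mk hR] with p hp
    have := hhyp.min_sub_le_gromovProd hgeo (x p.1) (y b) (z p.2) w
    linarith [le_min (hPQ hp.1 hb) (hQR hb' hp.2)]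

/-- An isometry `g` that shifts the sequence `x` (up to reindexing) fixes its limit point. -/
theorem isometry_apply {δ : ℝ} (hgeo : GeodesicMetricSpace X) (hhyp : RipsHyperbolic X δ)
    [la.NeBot] (h : GromovAsymptotic x la y lb) (g : X ≃ᵢ X) {φ ψ : α → α}
    (hφ : Tendsto φ la la) (hψ : Tendsto ψ la la) (hg : ∀ a, g (x (φ a)) = x (ψ a)) :
    GromovAsymptotic (fun b => g (y b)) lb y lb := by
  have hgx : GromovAsymptotic (fun a => x (ψ a)) la (fun b => g (y b)) lb := by
    simpa only [hg, id] using (h.comp hφ tendsto_id).map g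
  exact hgx.symm.trans hgeo hhyp (h.comp hψ tendsto_id)

theorem tendsto_atTop_of_dist_le {L : ℝ → X} (hL : IsGeodesicLine L)
    (h : GromovAsymptotic x la L atTop) {p : α → ℝ} {C : ℝ} (hp : ∀ a, dist (x a) (L (p a)) ≤ C) :
    Tendsto p la atTop := by
  refine tendsto_atTop.2 fun M => ?_
  obtain ⟨P, hP, T, hT, hPT⟩ := eventually_prod_iff.1 ((h (L 0)).eventually_ge_atTop (max M 1 + C))
  obtain ⟨t, ht, ht0⟩ := (hT.and (eventually_ge_atTop 0)).exists
  filter_upwards [hP] with a ha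
  have h₁ := hPT ha ht
  have h₂ := gromovProd_le_add_dist_left (x a) (L (p a)) (L t) (L 0)
  have h₃ := hL.gromovProd_le_max (p a) ht0
  rcases le_max_iff.1 (show max M 1 ≤ max (p a) 0 by linarith [hp a]) with h | h
  · linarith [le_max_left M 1]
  · linarith [le_max_right M 1]

end GromovAsymptotic

theorem abs_sub_sub_sub_le_of_tendsto_atTop {p : ℝ → ℝ} {c : ℝ}
    (hp : ∀ u v, |(|p u - p v| - |u - v|)| ≤ c) (htop : Tendsto p atTop atTop) (u v : ℝ) :
    |p u - p v - (u - v)| ≤ 2 * c := by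
  obtain ⟨U, hpU, hU⟩ := ((htop.eventually_ge_atTop (max (p u) (p v))).and
    (eventually_ge_atTop (max u v))).exists
  have hu := abs_le.1 (hp U u)
  have hv := abs_le.1 (hp U v)
  rw [abs_of_nonneg (sub_nonneg.2 ((le_max_left _ _).trans hpU)),
    abs_of_nonneg (sub_nonneg.2 ((le_max_left _ _).trans hU))] at hu
  rw [abs_of_nonneg (sub_nonneg.2 ((le_max_right _ _).trans hpU)),
    abs_of_nonneg (sub_nonneg.2 ((le_max_right _ _).trans hU))] at hv
  rw [abs_le]
  constructor <;> linarith

theorem exists_abs_le_of_sub_le_succ {G : ℕ → ℝ} {c : ℝ} (hc : 0 ≤ c) (h0 : 0 ≤ G 0)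
    (hstep : ∀ j, G j - c ≤ G (j + 1)) {J : ℕ} (hJ : G J ≤ 0) : ∃ j, |G j| ≤ c := by
  by_contra! hbig
  have hpos : ∀ j, 0 < G j := by
    intro j
    induction j with
    | zero => linarith [abs_of_nonneg h0 ▸ hbig 0]
    | succ j ih => rcases lt_abs.1 (hbig (j + 1)) with h | h <;> linarith [hstep j]
  linarith [hpos J]

/-- Along the progression `a + j h`, the function `Q s - s` starts `≥ 0`, eventually becomes
`≤ 0`, and drops by at most `2h + c` per step. -/
theorem exists_abs_sub_self_le {Q : ℝ → ℝ} {a c K h : ℝ} (hh : 0 < h) (ha : a ≤ Q a)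
    (hK : ∀ s, a ≤ s → Q s ≤ K) (hQ : ∀ s t, a ≤ s → a ≤ t → |Q s - Q t| ≤ |s - t| + c) :
    ∃ s, a ≤ s ∧ |Q s - s| ≤ 2 * h + c := by
  have hc : 0 ≤ c := by simpa using hQ a a le_rfl le_rfl
  have hsj : ∀ j : ℕ, a ≤ a + j * h := fun j => le_add_of_nonneg_right (by positivity)
  set G : ℕ → ℝ := fun j => Q (a + j * h) - (a + j * h)
  have hstep : ∀ j, G j - (2 * h + c) ≤ G (j + 1) := fun j => by
    have := abs_le.1 (hQ _ _ (hsj j) (hsj (j + 1)))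
    rw [show a + j * h - (a + (j + 1 : ℕ) * h) = -h by push_cast; ring, abs_neg,
      abs_of_pos hh] at this
    simp only [G]
    push_cast at this ⊢
    linarith
  obtain ⟨J, hJ⟩ := exists_nat_ge ((K - a) / h)
  have hGJ : G J ≤ 0 := by
    rw [div_le_iff₀ hh] at hJ
    linarith [hK _ (hsj J)]
  obtain ⟨j, hj⟩ := exists_abs_le_of_sub_le_succ (by positivity) (by simpa [G] using ha) hstep hGJ
  exact ⟨_, hsj j, hj⟩

section NearLine

variable {X : Type*} [MetricSpace X] {δ : ℝ} {L : ℝ → X}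

theorem exists_dist_le_of_gromovAsymptotic (hgeo : GeodesicMetricSpace X)
    (hhyp : RipsHyperbolic X δ) (hL : IsGeodesicLine L) {L' : ℝ → X} (hL' : IsGeodesicLine L')
    (htop : GromovAsymptotic L' atTop L atTop) (hbot : GromovAsymptotic L' atBot L atBot)
    (u : ℝ) : ∃ p, dist (L' u) (L p) ≤ 2 * δ := by
  obtain ⟨⟨a, c⟩, h₁, ha, hc⟩ := (((hbot (L' u)).eventually_gt_atTop (2 * δ)).and
    ((eventually_le_atBot u).prod_mk (eventually_le_atBot 0))).exists
  obtain ⟨⟨b, d⟩, h₂, hb, hd⟩ := (((htop (L' u)).eventually_gt_atTop (2 * δ)).and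
    ((eventually_ge_atTop u).prod_mk (eventually_ge_atTop 0))).exists
  have hs : u - a ∈ Icc 0 (dist (L' a) (L' b)) := by
    rw [hL'.dist_eq_sub (ha.trans hb)]
    constructor <;> linarith
  obtain ⟨r, -, hr⟩ := hhyp.exists_dist_le_of_quadrilateral hgeo
    (hL'.isGeodesicSegment (ha.trans hb)) (hL.isGeodesicSegment (hc.trans hd)) hs
    (by simpa only [add_sub_cancel] using h₁) (by simpa only [add_sub_cancel] using h₂)
  exact ⟨c + r, by simpa only [add_sub_cancel] using hr⟩

theorem exists_nonpos_dist_le_of_gromovAsymptotic (hgeo : GeodesicMetricSpace X)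
    (hhyp : RipsHyperbolic X δ) (hL : IsGeodesicLine L) {R : ℝ → X} (hR : IsGeodesicRay R)
    (h : GromovAsymptotic R atTop L atBot) {s : ℝ} (hs : dist (R 0) (L 0) ≤ s) :
    ∃ ψ ≤ 0, dist (R s) (L ψ) ≤ 4 * δ := by
  have hs0 : 0 ≤ s := dist_nonneg.trans hs
  by_cases hz : 2 * δ < gromovProd (R 0) (L 0) (R s)
  · obtain ⟨⟨b, c⟩, h₂, hb, hc⟩ := (((h (R s)).eventually_gt_atTop (2 * δ)).and
      ((eventually_ge_atTop s).prod_mk (eventually_le_atBot 0))).exists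
    have hk : IsGeodesicSegment (L 0) (L c) (fun t => L (-t)) := by
      simpa using hL.comp_neg.isGeodesicSegment (neg_nonneg.2 hc)
    obtain ⟨r, hr, hd⟩ := hhyp.exists_dist_le_of_quadrilateral hgeo
      (hR.isGeodesicSegment (hs0.trans hb)) hk (s := s)
      ⟨hs0, by rwa [hR.dist_zero_eq (hs0.trans hb)]⟩ hz h₂
    exact ⟨-r, neg_nonpos.2 hr.1, by linarith [dist_nonneg.trans hd]⟩
  · -- otherwise `R s` is already close to `L 0`, as it is far from `R 0`
    refine ⟨0, le_rfl, ?_⟩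
    unfold gromovProd at hz
    rw [hR s 0 hs0 le_rfl, sub_zero, abs_of_nonneg hs0] at hz
    linarith [dist_comm (R 0) (L 0)]

theorem IsGeodesicLine.abs_sub_sub_sub_le (hL : IsGeodesicLine L) {L' : ℝ → X}
    (hL' : IsGeodesicLine L') (htop : GromovAsymptotic L' atTop L atTop) {p : ℝ → ℝ} {C : ℝ}
    (hp : ∀ u, dist (L' u) (L (p u)) ≤ C) (u v : ℝ) : |p u - p v - (u - v)| ≤ 4 * C := by
  refine (abs_sub_sub_sub_le_of_tendsto_atTop (c := 2 * C) (fun u v => ?_)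
    (htop.tendsto_atTop_of_dist_le hL hp) u v).trans_eq (by ring)
  have := dist_dist_dist_le (L (p u)) (L (p v)) (L' u) (L' v)
  rw [hL, hL', Real.dist_eq, dist_comm (L (p u)), dist_comm (L (p v))] at this
  linarith [hp u, hp v]

theorem exists_nonpos_dist_pow_apply_le (hL : IsGeodesicLine L) {g : X ≃ᵢ X} {p : ℝ → ℝ}
    {C : ℝ} (hp : ∀ u, dist (g (L u)) (L (p u)) ≤ C) (hshift : ∀ u, p u ≤ u + p 0 + 4 * C)
    (hσ : p 0 ≤ -7 * C) (hnear : ∀ k : ℕ, ∃ r, dist ((g ^ k) (L 0)) (L r) ≤ C) (k : ℕ) :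
    ∃ r ≤ 0, dist ((g ^ k) (L 0)) (L r) ≤ C := by
  induction k with
  | zero => exact ⟨0, le_rfl, by simpa using dist_nonneg.trans (hp 0)⟩
  | succ k ih =>
    obtain ⟨r, hr0, hr⟩ := ih
    obtain ⟨r', hr'⟩ := hnear (k + 1)
    have hgk : (g ^ (k + 1)) (L 0) = g ((g ^ k) (L 0)) := by
      rw [pow_succ', IsometryEquiv.mul_apply]
    have : |r' - p r| ≤ 3 * C := by
      rw [← hL]
      calc dist (L r') (L (p r))
          ≤ dist (L r') ((g ^ (k + 1)) (L 0)) + dist ((g ^ (k + 1)) (L 0)) (g (L r)) +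
              dist (g (L r)) (L (p r)) := dist_triangle4 _ _ _ _
        _ ≤ C + C + C := add_le_add (add_le_add (by rw [dist_comm]; exact hr')
            (by rw [hgk, g.dist_eq]; exact hr)) (hp r)
        _ = 3 * C := by ring
    exact ⟨r', by linarith [le_abs_self (r' - p r), hshift r], hr'⟩

theorem exists_dist_apply_le_of_dist_le (hL : IsGeodesicLine L) (C : X ≃ᵢ X) {Q : ℝ → ℝ}
    {a ε K h : ℝ} (hh : 0 < h) (hQ : ∀ s, a ≤ s → dist (C (L s)) (L (Q s)) ≤ ε)
    (ha : a ≤ Q a) (hK : ∀ s, a ≤ s → Q s ≤ K) : ∃ x, dist (C x) x ≤ 3 * ε + 2 * h := by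
  obtain ⟨s, hs, hQs⟩ := exists_abs_sub_self_le (c := 2 * ε) hh ha hK fun s t hs ht => by
    rw [← hL, ← hL s t, ← C.dist_eq (L s) (L t)]
    linarith [dist_triangle4 (L (Q s)) (C (L s)) (C (L t)) (L (Q t)), hQ s hs, hQ t ht,
      dist_comm (L (Q s)) (C (L s))]
  refine ⟨L s, ?_⟩
  linarith [dist_triangle (C (L s)) (L (Q s)) (L s), hQ s hs, hL (Q s) s]

end NearLine

section StableNorm

variable {X : Type*} [MetricSpace X]

theorem dist_pow_apply_le (C : X ≃ᵢ X) (x : X) (m : ℕ) : dist ((C ^ m) x) x ≤ m * dist (C x) x := by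
  induction m with
  | zero => simp
  | succ m ih =>
    calc dist ((C ^ (m + 1)) x) x ≤ dist ((C ^ m) (C x)) ((C ^ m) x) + dist ((C ^ m) x) x := by
          rw [pow_succ, IsometryEquiv.mul_apply]; exact dist_triangle _ _ _
      _ ≤ dist (C x) x + m * dist (C x) x := by rw [IsometryEquiv.dist_eq]; gcongr
      _ = (m + 1 : ℕ) * dist (C x) x := by push_cast; ring

theorem le_dist_apply_of_tendsto (C : X ≃ᵢ X) {o : X} {l : ℝ}
    (hl : Tendsto (fun m : ℕ => dist ((C ^ m) o) o / m) atTop (𝓝 l)) (x : X) :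
    l ≤ dist (C x) x := by
  have hbound : Tendsto (fun m : ℕ => dist (C x) x + 2 * dist o x / m) atTop
      (𝓝 (dist (C x) x + 0)) :=
    tendsto_const_nhds.add (tendsto_const_nhds.div_atTop tendsto_natCast_atTop_atTop)
  refine le_of_tendsto_of_tendsto hl (by simpa using hbound) ?_
  filter_upwards [eventually_gt_atTop 0] with m hm
  have hm' : (0 : ℝ) < m := Nat.cast_pos.2 hm
  rw [div_le_iff₀ hm', add_mul, div_mul_cancel₀ _ hm'.ne']
  have := dist_triangle4 ((C ^ m) o) ((C ^ m) x) x o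
  rw [IsometryEquiv.dist_eq, dist_comm x o] at this
  linarith [dist_pow_apply_le C x m]

theorem mul_le_dist_pow_apply_of_tendsto (A : X ≃ᵢ X) {o : X} {l : ℝ}
    (hl : Tendsto (fun m : ℕ => dist ((A ^ m) o) o / m) atTop (𝓝 l)) (n : ℕ) :
    n * l ≤ dist ((A ^ n) o) o := by
  rcases n.eq_zero_or_pos with rfl | hn
  · simp
  have hpow : Tendsto (fun k : ℕ => dist (((A ^ n) ^ k) o) o / k) atTop (𝓝 (n * l)) := by
    refine ((hl.comp (tendsto_id.const_mul_atTop' hn)).const_mul (n : ℝ)).congr fun k => ?_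
    rcases k.eq_zero_or_pos with rfl | hk
    · simp
    simp only [Function.comp, id, ← pow_mul]
    push_cast
    field_simp
  exact le_dist_apply_of_tendsto (A ^ n) hpow o

end StableNorm

section Axis

variable {X : Type*} [MetricSpace X] {δ : ℝ} {L : ℝ → X} {A : X ≃ᵢ X}

theorem GromovAsymptotic.pow_apply (hgeo : GeodesicMetricSpace X) (hhyp : RipsHyperbolic X δ)
    {β : Type*} {o : X} {y : β → X} {lb : Filter β}
    (h : GromovAsymptotic (fun k : ℕ => (A ^ k) o) atTop y lb) (m : ℕ) :
    GromovAsymptotic (fun b => (A ^ m) (y b)) lb y lb :=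
  h.isometry_apply hgeo hhyp (A ^ m) tendsto_id (tendsto_add_atTop_nat m) fun k => by
    rw [id, ← IsometryEquiv.mul_apply, ← pow_add, add_comm]

theorem GromovAsymptotic.pow_apply_of_inv (hgeo : GeodesicMetricSpace X)
    (hhyp : RipsHyperbolic X δ) {β : Type*} {o : X} {y : β → X} {lb : Filter β}
    (h : GromovAsymptotic (fun k : ℕ => (A⁻¹ ^ k) o) atTop y lb) (m : ℕ) :
    GromovAsymptotic (fun b => (A ^ m) (y b)) lb y lb :=
  h.isometry_apply hgeo hhyp (A ^ m) (tendsto_add_atTop_nat m) tendsto_id fun k => by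
    rw [id, ← IsometryEquiv.mul_apply, inv_pow, inv_pow, pow_add, mul_inv_rev, ← mul_assoc,
      mul_inv_cancel, one_mul]

theorem exists_dist_pow_apply_le (hgeo : GeodesicMetricSpace X) (hhyp : RipsHyperbolic X δ)
    (hL : IsGeodesicLine L) (hA : GromovAsymptotic (fun k : ℕ => (A ^ k) (L 0)) atTop L atTop)
    (hA' : GromovAsymptotic (fun k : ℕ => (A⁻¹ ^ k) (L 0)) atTop L atBot) (m : ℕ) (u : ℝ) :
    ∃ p, dist ((A ^ m) (L u)) (L p) ≤ 2 * δ :=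
  exists_dist_le_of_gromovAsymptotic hgeo hhyp hL (hL.isometry_comp (A ^ m).isometry)
    (hA.pow_apply hgeo hhyp m) (hA'.pow_apply_of_inv hgeo hhyp m) u

/-- `Aⁿ` translates `L` towards `A⁺`: otherwise the orbit of `L 0` under `Aⁿ` would stay near the
negative half of `L`. -/
theorem sub_le_of_dist_pow_apply_le (hgeo : GeodesicMetricSpace X) (hhyp : RipsHyperbolic X δ)
    (hL : IsGeodesicLine L) (hA : GromovAsymptotic (fun k : ℕ => (A ^ k) (L 0)) atTop L atTop)
    (hA' : GromovAsymptotic (fun k : ℕ => (A⁻¹ ^ k) (L 0)) atTop L atBot) (n : ℕ) {p : ℝ → ℝ}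
    (hp : ∀ u, dist ((A ^ n) (L u)) (L (p u)) ≤ 2 * δ)
    (hτ : 16 * δ ≤ dist ((A ^ n) (L 0)) (L 0)) :
    dist ((A ^ n) (L 0)) (L 0) - 2 * δ ≤ p 0 := by
  have hτp : dist ((A ^ n) (L 0)) (L 0) ≤ 2 * δ + |p 0| := by
    have := dist_triangle ((A ^ n) (L 0)) (L (p 0)) (L 0)
    rw [hL, sub_zero] at this
    linarith [hp 0]
  rcases n.eq_zero_or_pos with rfl | hn
  · have := hp 0
    rw [pow_zero, IsometryEquiv.coe_one, id, hL, zero_sub, abs_neg] at this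
    simp only [pow_zero, IsometryEquiv.coe_one, id, dist_self]
    linarith [neg_abs_le (p 0)]
  by_contra hlt
  have hσ : p 0 ≤ -7 * (2 * δ) := by
    cases abs_cases (p 0) <;> linarith
  have hshift : ∀ u, p u ≤ u + p 0 + 4 * (2 * δ) := fun u => by
    have := hL.abs_sub_sub_sub_le (hL.isometry_comp (A ^ n).isometry) (hA.pow_apply hgeo hhyp n)
      hp u 0
    linarith [le_abs_self (p u - p 0 - (u - 0))]
  choose r hr0 hr using exists_nonpos_dist_pow_apply_le hL hp hshift hσ fun k => by
    rw [← pow_mul]; exact exists_dist_pow_apply_le hgeo hhyp hL hA hA' (n * k) 0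
  have horbit : GromovAsymptotic (fun k : ℕ => ((A ^ n) ^ k) (L 0)) atTop L atTop := by
    simpa only [← pow_mul, id] using hA.comp (tendsto_id.const_mul_atTop' hn) tendsto_id
  obtain ⟨k, hk⟩ := ((horbit.tendsto_atTop_of_dist_le hL hr).eventually_gt_atTop 0).exists
  linarith [hr0 k]

theorem exists_dist_pow_mul_apply_le (hgeo : GeodesicMetricSpace X) (hhyp : RipsHyperbolic X δ)
    (hL : IsGeodesicLine L) (hA : GromovAsymptotic (fun k : ℕ => (A ^ k) (L 0)) atTop L atTop)
    (hA' : GromovAsymptotic (fun k : ℕ => (A⁻¹ ^ k) (L 0)) atTop L atBot) {B : X ≃ᵢ X}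
    (hB : GromovAsymptotic (fun t => B (L t)) atTop L atBot) (n : ℕ)
    (hτ : 3 * dist (B (L 0)) (L 0) + 16 * δ ≤ dist ((A ^ n) (L 0)) (L 0)) {h : ℝ} (hh : 0 < h) :
    ∃ x, dist ((A ^ n * B) x) x ≤ 18 * δ + 2 * h := by
  set D := dist (B (L 0)) (L 0)
  choose p hp using exists_dist_pow_apply_le hgeo hhyp hL hA hA' n
  have hshift : ∀ u, |p u - p 0 - u| ≤ 4 * (2 * δ) := fun u => by
    simpa only [sub_zero] using hL.abs_sub_sub_sub_le (hL.isometry_comp (A ^ n).isometry)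
      (hA.pow_apply hgeo hhyp n) hp u 0
  have hD : 0 ≤ D := dist_nonneg
  have hσ := sub_le_of_dist_pow_apply_le hgeo hhyp hL hA hA' n hp (by linarith)
  choose! ψ hψ0 hψ using fun s (hs : D ≤ s) => exists_nonpos_dist_le_of_gromovAsymptotic hgeo
    hhyp hL (hL.isometry_comp B.isometry).isGeodesicRay hB hs
  have hQ : ∀ s, D ≤ s → dist ((A ^ n * B) (L s)) (L (p (ψ s))) ≤ 6 * δ := fun s hs => by
    rw [IsometryEquiv.mul_apply]
    linarith [dist_triangle ((A ^ n) (B (L s))) ((A ^ n) (L (ψ s))) (L (p (ψ s))),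
      (A ^ n).dist_eq (B (L s)) (L (ψ s)), hψ s hs, hp (ψ s)]
  have hψD : -(2 * D + 4 * δ) ≤ ψ D := by
    have := dist_triangle4 (L 0) (B (L 0)) (B (L D)) (L (ψ D))
    rw [B.dist_eq, hL, hL] at this
    simp only [zero_sub, abs_neg] at this
    rw [abs_of_nonneg hD, dist_comm (L 0)] at this
    linarith [neg_abs_le (ψ D), hψ D le_rfl]
  refine (exists_dist_apply_le_of_dist_le hL (A ^ n * B) hh hQ ?_ (K := p 0 + 8 * δ)
    fun s hs => ?_).imp fun x hx => hx.trans_eq (by ring)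
  · -- `p (ψ D) ≥ ψ D + p 0 - 8δ ≥ -(2D + 4δ) + (τ - 2δ) - 8δ ≥ D`
    linarith [neg_abs_le (p (ψ D) - p 0 - ψ D), hshift (ψ D), (abs_nonneg _).trans (hshift 0)]
  · linarith [le_abs_self (p (ψ s) - p 0 - ψ s), hshift (ψ s), hψ0 s hs]

end Axis

/-- If `A` is a hyperbolic isometry, `L` a geodesic from `A⁻` to `A⁺` with
`o = L 0`, and `B` an isometry with `B(A⁺) = A⁻` (encoded by the Gromov products
`(B Aⁿ o | A⁻ᵐ o)_o` tending to `+∞` as `min(n,m) → +∞`), then with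
`N = (1/l_S(A)) · max{3 d(Bo,o) + 18δ, 5 d(Bo,o) + 10δ}`, for every integer `n ≥ N`
one has `l_S(Aⁿ B) ≤ 30δ`. -/
theorem stable_norm_AnB_bounded
    {X : Type*} [MetricSpace X] (δ : ℝ) (hδ : 0 ≤ δ)
    (hgeo : GeodesicMetricSpace X) (hhyp : RipsHyperbolic X δ)
    (A B : X ≃ᵢ X) (L : ℝ → X) (hL : IsGeodesicFromTo A L)
    (o : X) (ho : o = L 0)
    (lA : ℝ)
    (hlA : Tendsto (fun n : ℕ => dist ((A ^ n) o) o / n) atTop (𝓝 lA)) (hlA0 : 0 < lA)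
    (hBA : ∀ K : ℝ, ∃ N : ℝ, ∀ n m : ℕ, N ≤ (n : ℝ) → N ≤ (m : ℝ) →
      K ≤ gromovProd (B ((A ^ n) o)) ((A⁻¹ ^ m) o) o)
    (lAnB : ℕ → ℝ)
    (hlAnB : ∀ n : ℕ,
      Tendsto (fun m : ℕ => dist (((A ^ n * B) ^ m) o) o / m) atTop (𝓝 (lAnB n))) :
    ∀ n : ℕ,
      (1 / lA) * max (3 * dist (B o) o + 18 * δ) (5 * dist (B o) o + 10 * δ) ≤ (n : ℝ) →
      lAnB n ≤ 30 * δ := by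
  subst ho
  intro n hn
  have hA : GromovAsymptotic (fun k : ℕ => (A ^ k) (L 0)) atTop L atTop :=
    .of_forall_exists tendsto_natCast_atTop_atTop tendsto_id hL.2.1
  have hA' : GromovAsymptotic (fun k : ℕ => (A⁻¹ ^ k) (L 0)) atTop L atBot := by
    simpa only [neg_neg, id] using (GromovAsymptotic.of_forall_exists tendsto_natCast_atTop_atTop
      tendsto_id hL.2.2).comp tendsto_id tendsto_neg_atBot_atTop
  have hB : GromovAsymptotic (fun t => B (L t)) atTop L atBot :=
    ((hA.symm.map B).trans hgeo hhyp (.of_forall_exists tendsto_natCast_atTop_atTop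
      tendsto_natCast_atTop_atTop hBA)).trans hgeo hhyp hA'
  have hτ : 3 * dist (B (L 0)) (L 0) + 16 * δ ≤ dist ((A ^ n) (L 0)) (L 0) := by
    rw [one_div, inv_mul_le_iff₀ hlA0] at hn
    linarith [le_max_left (3 * dist (B (L 0)) (L 0) + 18 * δ) (5 * dist (B (L 0)) (L 0) + 10 * δ),
      mul_le_dist_pow_apply_of_tendsto A hlA n]
  have hAnB : lAnB n ≤ 18 * δ := le_of_forall_pos_le_add fun ε hε => by
    obtain ⟨x, hx⟩ := exists_dist_pow_mul_apply_le hgeo hhyp hL.1 hA hA' hB n hτ (half_pos hε)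
    linarith [le_dist_apply_of_tendsto _ (hlAnB n) x]
  linarith
end
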